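/- arXiv:2502.00179 — 3 statements merged into one kernel-verified Lean document; each statement's English description precedes it below -/
import Mathlib

section
/- Let ℓ ≥ 2 and let A be an ℓ × ℓ complex matrix (rows and columns indexed by 0, …, ℓ−1) such that r_i(A) < k_{0,i}(A) for all i > 0. Then there exists a unique eigenvalue μ of A satisfying |μ − A_{0,0}| ≤ max_{i > 0} r_0(A) r_i(A) / k_{0,i}(A). -/
open scoped BigOperators

/-- The deleted row sum `r_i(A) = Σ_{j ≠ i} |A_{i,j}|`. -/
noncomputable def rowSumOff {ℓ : ℕ} (A : Matrix (Fin ℓ) (Fin ℓ) ℂ) (i : Fin ℓ) : ℝ :=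
  ∑ j ∈ Finset.univ.erase i, ‖A i j‖

/-- The Gershgorin disc `D_i(A) = {z : |z − A_{i,i}| ≤ r_i(A)}`. -/
def gershDisc {ℓ : ℕ} (A : Matrix (Fin ℓ) (Fin ℓ) ℂ) (i : Fin ℓ) : Set ℂ :=
  {z : ℂ | ‖z - A i i‖ ≤ rowSumOff A i}

/-- The separation `k_{0,i}(A)` between the Gershgorin discs `D_0(A)` and `D_i(A)`. -/
noncomputable def discSep {ℓ : ℕ} [NeZero ℓ] (A : Matrix (Fin ℓ) (Fin ℓ) ℂ) (i : Fin ℓ) : ℝ :=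
  sInf {x : ℝ | ∃ u ∈ gershDisc A 0, ∃ v ∈ gershDisc A i, x = ‖u - v‖}

namespace GBaux

open Finset Matrix

set_option linter.unusedSectionVars false
set_option linter.unusedVariables false

variable {ℓ : ℕ} [NeZero ℓ] (A : Matrix (Fin ℓ) (Fin ℓ) ℂ)

lemma rowSumOff_nonneg' (i : Fin ℓ) : 0 ≤ rowSumOff A i :=
  Finset.sum_nonneg fun _ _ => norm_nonneg _

lemma sum_sub_le (j : Fin ℓ) :
    ∑ j' ∈ (Finset.univ.erase j).erase 0, ‖A j j'‖ ≤ rowSumOff A j :=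
  Finset.sum_le_sum_of_subset_of_nonneg (Finset.erase_subset _ _)
    (fun _ _ _ => norm_nonneg _)

/-- per-row bound for eigenvector-type equations -/
lemma rowbound (hℓ : 2 ≤ ℓ) (z : ℂ) (x : Fin ℓ → ℂ)
    (heq : ∀ j : Fin ℓ, j ≠ 0 → (z - A j j) * x j = ∑ j' ∈ Finset.univ.erase j, A j j' * x j')
    (hreg : ∀ j : Fin ℓ, j ≠ 0 → rowSumOff A j < ‖z - A j j‖) :
    ∀ j : Fin ℓ, j ≠ 0 →
      ‖x j‖ * ‖z - A j j‖ ≤ rowSumOff A j * ‖x 0‖ := by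
  have hone : (⟨1, by omega⟩ : Fin ℓ) ≠ 0 := by
    simp [Fin.ext_iff]
  obtain ⟨j₁, hj₁mem, hmax⟩ := Finset.exists_max_image (Finset.univ.erase (0 : Fin ℓ))
    (fun j => ‖x j‖) ⟨⟨1, by omega⟩, by simp [hone]⟩
  have hj₁ : j₁ ≠ 0 := (Finset.mem_erase.mp hj₁mem).1
  have hmax' : ∀ j : Fin ℓ, j ≠ 0 → ‖x j‖ ≤ ‖x j₁‖ := by
    intro j hj; exact hmax j (by simp [hj])
  have key : ‖x j₁‖ ≤ ‖x 0‖ := by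
    by_contra hlt
    push_neg at hlt
    have hTpos : 0 < ‖x j₁‖ :=
      lt_of_le_of_lt (norm_nonneg _) hlt
    have h1 : ‖z - A j₁ j₁‖ * ‖x j₁‖
        ≤ rowSumOff A j₁ * ‖x j₁‖ := by
      calc ‖z - A j₁ j₁‖ * ‖x j₁‖
          = ‖∑ j' ∈ Finset.univ.erase j₁, A j₁ j' * x j'‖ := by
            rw [← norm_mul, heq j₁ hj₁]
        _ ≤ ∑ j' ∈ Finset.univ.erase j₁, ‖A j₁ j' * x j'‖ :=
            norm_sum_le _ _
        _ ≤ ∑ j' ∈ Finset.univ.erase j₁, ‖A j₁ j'‖ * ‖x j₁‖ := by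
            apply Finset.sum_le_sum
            intro j' hj'
            rw [norm_mul]
            apply mul_le_mul_of_nonneg_left _ (norm_nonneg _)
            by_cases h0 : j' = 0
            · subst h0; exact hlt.le
            · exact hmax' j' h0
        _ = rowSumOff A j₁ * ‖x j₁‖ := by rw [rowSumOff, Finset.sum_mul]
    have := (mul_le_mul_iff_of_pos_right hTpos).mp h1
    exact absurd (hreg j₁ hj₁) (not_lt.mpr this)
  intro j hj
  calc ‖x j‖ * ‖z - A j j‖
      = ‖∑ j' ∈ Finset.univ.erase j, A j j' * x j'‖ := by
        rw [mul_comm, ← norm_mul, heq j hj]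
    _ ≤ ∑ j' ∈ Finset.univ.erase j, ‖A j j'‖ * ‖x j'‖ := by
        refine le_trans (norm_sum_le _ _) ?_
        apply Finset.sum_le_sum; intro j' _; rw [norm_mul]
    _ ≤ ∑ j' ∈ Finset.univ.erase j, ‖A j j'‖ * ‖x 0‖ := by
        apply Finset.sum_le_sum
        intro j' _
        apply mul_le_mul_of_nonneg_left _ (norm_nonneg _)
        by_cases h0 : j' = 0
        · subst h0; exact le_rfl
        · exact le_trans (hmax' j' h0) key
    _ = rowSumOff A j * ‖x 0‖ := by rw [rowSumOff, Finset.sum_mul]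

/-- sup bound with inhomogeneity, for difference vectors with vanishing `0`-th entry -/
lemma supbound (hℓ : 2 ≤ ℓ) (z : ℂ) (x w : Fin ℓ → ℂ) (hx0 : x 0 = 0)
    (heq : ∀ j : Fin ℓ, j ≠ 0 →
      (z - A j j) * x j = (∑ j' ∈ (Finset.univ.erase j).erase 0, A j j' * x j') + w j)
    (hreg : ∀ j : Fin ℓ, j ≠ 0 → rowSumOff A j < ‖z - A j j‖) :
    ∃ j₁ : Fin ℓ, j₁ ≠ 0 ∧ ∀ j : Fin ℓ, j ≠ 0 →
      ‖x j‖ * (‖z - A j₁ j₁‖ - rowSumOff A j₁) ≤ ‖w j₁‖ := by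
  have hone : (⟨1, by omega⟩ : Fin ℓ) ≠ 0 := by simp [Fin.ext_iff]
  obtain ⟨j₁, hj₁mem, hmax⟩ := Finset.exists_max_image (Finset.univ.erase (0 : Fin ℓ))
    (fun j => ‖x j‖) ⟨⟨1, by omega⟩, by simp [hone]⟩
  have hj₁ : j₁ ≠ 0 := (Finset.mem_erase.mp hj₁mem).1
  have hmax' : ∀ j : Fin ℓ, j ≠ 0 → ‖x j‖ ≤ ‖x j₁‖ := by
    intro j hj; exact hmax j (by simp [hj])
  refine ⟨j₁, hj₁, ?_⟩
  have hT : ‖x j₁‖ * (‖z - A j₁ j₁‖ - rowSumOff A j₁)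
      ≤ ‖w j₁‖ := by
    have h1 : ‖z - A j₁ j₁‖ * ‖x j₁‖
        ≤ rowSumOff A j₁ * ‖x j₁‖ + ‖w j₁‖ := by
      calc ‖z - A j₁ j₁‖ * ‖x j₁‖
          = ‖(∑ j' ∈ (Finset.univ.erase j₁).erase 0, A j₁ j' * x j') + w j₁‖ := by
            rw [← norm_mul, heq j₁ hj₁]
        _ ≤ ‖∑ j' ∈ (Finset.univ.erase j₁).erase 0, A j₁ j' * x j'‖
            + ‖w j₁‖ := norm_add_le _ _
        _ ≤ (∑ j' ∈ (Finset.univ.erase j₁).erase 0,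
              ‖A j₁ j'‖ * ‖x j₁‖) + ‖w j₁‖ := by
            gcongr
            refine le_trans (norm_sum_le _ _) ?_
            apply Finset.sum_le_sum
            intro j' hj'
            rw [norm_mul]
            apply mul_le_mul_of_nonneg_left _ (norm_nonneg _)
            exact hmax' j' (Finset.mem_erase.mp hj').1
        _ ≤ rowSumOff A j₁ * ‖x j₁‖ + ‖w j₁‖ := by
            gcongr
            rw [← Finset.sum_mul]
            exact mul_le_mul_of_nonneg_right (sum_sub_le A j₁) (norm_nonneg _)
    nlinarith [norm_nonneg (x j₁)]
  intro j hj
  refine le_trans ?_ hT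
  apply mul_le_mul_of_nonneg_right (hmax' j hj)
  have := hreg j₁ hj₁
  linarith

/-- separation lower bound on distance between centers -/
lemma geom (j : Fin ℓ) (hj : j ≠ 0) (hkpos : 0 < discSep A j) :
    discSep A j + (rowSumOff A 0 + rowSumOff A j) ≤ ‖A 0 0 - A j j‖ := by
  set r0 := rowSumOff A 0 with hr0
  set rj := rowSumOff A j with hrj
  have hr0n : 0 ≤ r0 := rowSumOff_nonneg' A 0
  have hrjn : 0 ≤ rj := rowSumOff_nonneg' A j
  set m := ‖A 0 0 - A j j‖ with hm
  have hbdd : BddBelow {x : ℝ | ∃ u ∈ gershDisc A 0, ∃ v ∈ gershDisc A j,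
      x = ‖u - v‖} := by
    refine ⟨0, ?_⟩
    rintro x ⟨u, hu, v, hv, rfl⟩
    exact norm_nonneg _
  have hle : ∀ u ∈ gershDisc A 0, ∀ v ∈ gershDisc A j,
      discSep A j ≤ ‖u - v‖ := by
    intro u hu v hv
    exact csInf_le hbdd ⟨u, hu, v, hv, rfl⟩
  by_cases hcase : m ≤ r0 + rj
  · exfalso
    by_cases hm0 : m = 0
    · have h1 : discSep A j ≤ 0 := by
        have := hle (A 0 0) (by simp [gershDisc, hr0n, rowSumOff_nonneg' A 0]) (A 0 0)
          (by
            have : ‖A 0 0 - A j j‖ = 0 := hm0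
            simpa [gershDisc, this] using hrjn)
        simpa using this
      linarith
    · have hmpos : 0 < m := lt_of_le_of_ne (norm_nonneg _) (Ne.symm hm0)
      set t : ℝ := min r0 m / m with ht
      set p : ℂ := A 0 0 + (t : ℂ) * (A j j - A 0 0) with hp
      have hpu : p ∈ gershDisc A 0 := by
        simp only [gershDisc, Set.mem_setOf_eq, hp]
        have : A 0 0 + (t : ℂ) * (A j j - A 0 0) - A 0 0 = (t : ℂ) * (A j j - A 0 0) := by ring
        rw [this, norm_mul, Complex.norm_real, Real.norm_eq_abs]
        have habs : ‖A j j - A 0 0‖ = m := by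
          rw [hm, norm_sub_rev]
        rw [habs, abs_of_nonneg (by positivity)]
        rw [ht, div_mul_cancel₀ _ (ne_of_gt hmpos)]
        exact min_le_left _ _
      have hpv : p ∈ gershDisc A j := by
        simp only [gershDisc, Set.mem_setOf_eq, hp]
        have : A 0 0 + (t : ℂ) * (A j j - A 0 0) - A j j
            = ((1 : ℝ) - t : ℝ) * (A 0 0 - A j j) := by
          push_cast; ring
        rw [this, norm_mul, Complex.norm_real, Real.norm_eq_abs, ← hm]
        have h1t : (1 : ℝ) - t = (m - min r0 m) / m := by
          rw [ht]; field_simp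
        rw [h1t, abs_of_nonneg (by
          apply div_nonneg _ hmpos.le
          have := min_le_right r0 m; linarith)]
        rw [div_mul_cancel₀ _ (ne_of_gt hmpos)]
        have : m - min r0 m ≤ rj := by
          rcases le_total r0 m with hh | hh
          · rw [min_eq_left hh]; linarith
          · rw [min_eq_right hh]; linarith
        linarith
      have := hle p hpu p hpv
      simp at this
      linarith
  · push_neg at hcase
    have hmpos : 0 < m := by linarith
    set u : ℂ := A 0 0 + ((r0 / m : ℝ) : ℂ) * (A j j - A 0 0) with hu
    set v : ℂ := A 0 0 + (((m - rj) / m : ℝ) : ℂ) * (A j j - A 0 0) with hv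
    have habs : ‖A j j - A 0 0‖ = m := by rw [hm, norm_sub_rev]
    have huD : u ∈ gershDisc A 0 := by
      simp only [gershDisc, Set.mem_setOf_eq, hu]
      have : A 0 0 + ((r0 / m : ℝ) : ℂ) * (A j j - A 0 0) - A 0 0
          = ((r0 / m : ℝ) : ℂ) * (A j j - A 0 0) := by ring
      rw [this, norm_mul, Complex.norm_real, Real.norm_eq_abs, habs,
        abs_of_nonneg (div_nonneg hr0n hmpos.le), div_mul_cancel₀ _ (ne_of_gt hmpos)]
    have hvD : v ∈ gershDisc A j := by
      simp only [gershDisc, Set.mem_setOf_eq, hv]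
      have : A 0 0 + (((m - rj) / m : ℝ) : ℂ) * (A j j - A 0 0) - A j j
          = ((1 - (m - rj) / m : ℝ) : ℂ) * (A 0 0 - A j j) := by
        push_cast; ring
      rw [this, norm_mul, Complex.norm_real, Real.norm_eq_abs, ← hm]
      have h1 : (1 : ℝ) - (m - rj) / m = rj / m := by field_simp; ring
      rw [h1, abs_of_nonneg (div_nonneg hrjn hmpos.le), div_mul_cancel₀ _ (ne_of_gt hmpos)]
    have huv : ‖u - v‖ = m - r0 - rj := by
      have : u - v = ((r0 / m - (m - rj) / m : ℝ) : ℂ) * (A j j - A 0 0) := by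
        rw [hu, hv]; push_cast; ring
      rw [this, norm_mul, Complex.norm_real, Real.norm_eq_abs, habs]
      have h2 : r0 / m - (m - rj) / m = -((m - r0 - rj) / m) := by field_simp; ring
      rw [h2, abs_neg, abs_of_nonneg (div_nonneg (by linarith) hmpos.le),
        div_mul_cancel₀ _ (ne_of_gt hmpos)]
    have := hle u huD v hvD
    rw [huv] at this
    linarith

/-- row formula for `(z • 1 - A).mulVec v` -/
lemma mulVec_row (z : ℂ) (v : Fin ℓ → ℂ) (j : Fin ℓ) :
    ((z • (1 : Matrix (Fin ℓ) (Fin ℓ) ℂ) - A).mulVec v) j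
      = (z - A j j) * v j - ∑ j' ∈ Finset.univ.erase j, A j j' * v j' := by
  show ∑ j', (z • (1 : Matrix (Fin ℓ) (Fin ℓ) ℂ) - A) j j' * v j' = _
  rw [← Finset.sum_erase_add _ _ (Finset.mem_univ j)]
  have h1 : ∀ j' ∈ Finset.univ.erase j,
      (z • (1 : Matrix (Fin ℓ) (Fin ℓ) ℂ) - A) j j' * v j' = -(A j j' * v j') := by
    intro j' hj'
    have hne : j' ≠ j := (Finset.mem_erase.mp hj').1
    simp [Matrix.sub_apply, Matrix.smul_apply, Matrix.one_apply, Ne.symm hne]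
  rw [Finset.sum_congr rfl h1]
  have h2 : (z • (1 : Matrix (Fin ℓ) (Fin ℓ) ℂ) - A) j j = z - A j j := by
    simp [Matrix.sub_apply, Matrix.smul_apply, Matrix.one_apply]
  rw [h2, Finset.sum_neg_distrib]
  ring

lemma charpoly_isRoot_iff (μ : ℂ) :
    A.charpoly.IsRoot μ ↔ (μ • (1 : Matrix (Fin ℓ) (Fin ℓ) ℂ) - A).det = 0 := by
  rw [Polynomial.IsRoot.def, Matrix.charpoly, eval_det, Matrix.matPolyEquiv_charmatrix]
  have hev : Polynomial.eval (Matrix.scalar (Fin ℓ) μ)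
      (Polynomial.X - Polynomial.C A) = μ • (1 : Matrix (Fin ℓ) (Fin ℓ) ℂ) - A := by
    rw [Polynomial.eval_sub, Polynomial.eval_X, Polynomial.eval_C]
    congr 1
    rw [Matrix.scalar_apply, Matrix.smul_eq_diagonal_mul]
    ext i j
    by_cases hij : i = j <;> simp [Matrix.diagonal, hij]
  rw [hev]

noncomputable def Cmat (z : ℂ) : Matrix (Fin ℓ) (Fin ℓ) ℂ :=
  Matrix.updateRow (z • (1 : Matrix (Fin ℓ) (Fin ℓ) ℂ) - A) 0 (Pi.single 0 1)

lemma Cmat_row0 (z : ℂ) (v : Fin ℓ → ℂ) : ((Cmat A z).mulVec v) 0 = v 0 := by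
  show (Cmat A z) 0 ⬝ᵥ v = v 0
  rw [Cmat, Matrix.updateRow_self, single_dotProduct, one_mul]

lemma Cmat_rowne (z : ℂ) (v : Fin ℓ → ℂ) (j : Fin ℓ) (hj : j ≠ 0) :
    ((Cmat A z).mulVec v) j
      = (z - A j j) * v j - ∑ j' ∈ Finset.univ.erase j, A j j' * v j' := by
  have : ((Cmat A z).mulVec v) j = ((z • (1 : Matrix (Fin ℓ) (Fin ℓ) ℂ) - A).mulVec v) j := by
    show (Cmat A z) j ⬝ᵥ v = _
    rw [Cmat, Matrix.updateRow_ne hj]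
    rfl
  rw [this, mulVec_row A z v j]

lemma Cmat_isUnit (hℓ : 2 ≤ ℓ) (z : ℂ)
    (hreg : ∀ j : Fin ℓ, j ≠ 0 → rowSumOff A j < ‖z - A j j‖) :
    IsUnit (Cmat A z).det := by
  rw [isUnit_iff_ne_zero]
  intro hdet
  obtain ⟨v, hvne, hveq⟩ := Matrix.exists_mulVec_eq_zero_iff.mpr hdet
  have hv0 : v 0 = 0 := by
    have := congrFun hveq 0
    rwa [Cmat_row0, Pi.zero_apply] at this
  have hrows : ∀ j : Fin ℓ, j ≠ 0 →
      (z - A j j) * v j = ∑ j' ∈ Finset.univ.erase j, A j j' * v j' := by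
    intro j hj
    have := congrFun hveq j
    rw [Cmat_rowne A z v j hj, Pi.zero_apply, sub_eq_zero] at this
    exact this
  have hb := rowbound A hℓ z v hrows hreg
  apply hvne
  funext j
  by_cases hj : j = 0
  · rw [hj, hv0]; rfl
  · have h1 := hb j hj
    rw [hv0, norm_zero, mul_zero] at h1
    have h2 : 0 < ‖z - A j j‖ :=
      lt_of_le_of_lt (Finset.sum_nonneg fun _ _ => norm_nonneg _) (hreg j hj)
    have : ‖v j‖ ≤ 0 := by nlinarith [norm_nonneg (v j)]
    exact norm_eq_zero.mp (le_antisymm this (norm_nonneg _))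

noncomputable def xv (z : ℂ) : Fin ℓ → ℂ := ((Cmat A z)⁻¹).mulVec (Pi.single 0 1)

lemma xv_spec (hℓ : 2 ≤ ℓ) (z : ℂ)
    (hreg : ∀ j : Fin ℓ, j ≠ 0 → rowSumOff A j < ‖z - A j j‖) :
    (Cmat A z).mulVec (xv A z) = Pi.single 0 1 := by
  rw [xv, Matrix.mulVec_mulVec, Matrix.mul_nonsing_inv _ (Cmat_isUnit A hℓ z hreg),
    Matrix.one_mulVec]

lemma xv_zero (hℓ : 2 ≤ ℓ) (z : ℂ)
    (hreg : ∀ j : Fin ℓ, j ≠ 0 → rowSumOff A j < ‖z - A j j‖) :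
    xv A z 0 = 1 := by
  have := congrFun (xv_spec A hℓ z hreg) 0
  rwa [Cmat_row0, Pi.single_eq_same] at this

lemma xv_row (hℓ : 2 ≤ ℓ) (z : ℂ)
    (hreg : ∀ j : Fin ℓ, j ≠ 0 → rowSumOff A j < ‖z - A j j‖) :
    ∀ j : Fin ℓ, j ≠ 0 →
      (z - A j j) * xv A z j = ∑ j' ∈ Finset.univ.erase j, A j j' * xv A z j' := by
  intro j hj
  have := congrFun (xv_spec A hℓ z hreg) j
  rw [Cmat_rowne A z _ j hj, Pi.single_eq_of_ne hj, sub_eq_zero] at this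
  exact this

lemma xv_bound (hℓ : 2 ≤ ℓ) (z : ℂ)
    (hreg : ∀ j : Fin ℓ, j ≠ 0 → rowSumOff A j < ‖z - A j j‖) :
    ∀ j : Fin ℓ, j ≠ 0 →
      ‖xv A z j‖ * ‖z - A j j‖ ≤ rowSumOff A j := by
  intro j hj
  have := rowbound A hℓ z (xv A z) (xv_row A hℓ z hreg) hreg j hj
  rwa [xv_zero A hℓ z hreg, norm_one, mul_one] at this

noncomputable def phi (z : ℂ) : ℂ :=
  A 0 0 + ∑ j ∈ Finset.univ.erase 0, A 0 j * xv A z j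

end GBaux

set_option maxHeartbeats 2000000 in
/-- Gershgorin–Brauer. If `r_i(A) < k_{0,i}(A)` for every `i > 0`,
then `A` has a unique eigenvalue `μ` with
`|μ − A_{0,0}| ≤ max_{i > 0} r_0(A) r_i(A) / k_{0,i}(A)`. -/
theorem gershgorin_brauer_unique_eigenvalue
    {ℓ : ℕ} [NeZero ℓ] (hℓ : 2 ≤ ℓ) (A : Matrix (Fin ℓ) (Fin ℓ) ℂ)
    (h : ∀ i : Fin ℓ, i ≠ 0 → rowSumOff A i < discSep A i) :
    ∃! μ : ℂ, A.charpoly.IsRoot μ ∧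
      ‖μ - A 0 0‖ ≤
        ⨆ i : {i : Fin ℓ // i ≠ 0}, rowSumOff A 0 * rowSumOff A (i : Fin ℓ) / discSep A i := by
  classical
  open Finset in
  have hone : (⟨1, by omega⟩ : Fin ℓ) ≠ 0 := by simp [Fin.ext_iff]
  haveI hNE : Nonempty {i : Fin ℓ // i ≠ 0} := ⟨⟨⟨1, by omega⟩, hone⟩⟩
  have hr0n : 0 ≤ rowSumOff A 0 := GBaux.rowSumOff_nonneg' A 0
  have hrn : ∀ j : Fin ℓ, 0 ≤ rowSumOff A j := GBaux.rowSumOff_nonneg' A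
  have hkpos : ∀ j : Fin ℓ, j ≠ 0 → 0 < discSep A j := fun j hj =>
    lt_of_le_of_lt (hrn j) (h j hj)
  set M := ⨆ i : {i : Fin ℓ // i ≠ 0},
    rowSumOff A 0 * rowSumOff A (i : Fin ℓ) / discSep A i with hMd
  have hterm_le_M : ∀ j : Fin ℓ, j ≠ 0 →
      rowSumOff A 0 * rowSumOff A j / discSep A j ≤ M := by
    intro j hj
    have := le_ciSup (f := fun i : {i : Fin ℓ // i ≠ 0} =>
        rowSumOff A 0 * rowSumOff A (i : Fin ℓ) / discSep A i)
      (Set.Finite.bddAbove (Set.finite_range _)) (⟨j, hj⟩ : {i : Fin ℓ // i ≠ 0})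
    simpa using this
  have hM_le_r0 : M ≤ rowSumOff A 0 := by
    refine ciSup_le ?_
    rintro ⟨j, hj⟩
    rw [div_le_iff₀ (hkpos j hj)]
    exact mul_le_mul_of_nonneg_left (h j hj).le hr0n
  have hgeom := fun (j : Fin ℓ) (hj : j ≠ 0) => GBaux.geom A j hj (hkpos j hj)
  have hlow : ∀ z : ℂ, ∀ t : ℝ, ‖z - A 0 0‖ ≤ t → ∀ j : Fin ℓ, j ≠ 0 →
      discSep A j + rowSumOff A j + (rowSumOff A 0 - t) ≤ ‖z - A j j‖ := by
    intro z t hz j hj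
    have h1 := hgeom j hj
    have h2 : ‖A 0 0 - A j j‖
        ≤ ‖A 0 0 - z‖ + ‖z - A j j‖ := by
      calc ‖A 0 0 - A j j‖
          = ‖(A 0 0 - z) + (z - A j j)‖ := by congr 1; ring
        _ ≤ _ := norm_add_le _ _
    have h3 : ‖A 0 0 - z‖ = ‖z - A 0 0‖ :=
      norm_sub_rev _ _
    linarith
  -- the radius ρ
  have hEsne : (Finset.univ.erase (0 : Fin ℓ)).Nonempty := ⟨⟨1, by omega⟩, by simp [hone]⟩
  set ρ := ((Finset.univ.erase (0 : Fin ℓ)).image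
      (fun j => rowSumOff A 0 * rowSumOff A j / (discSep A j + rowSumOff A j))).max'
      (hEsne.image _) with hρd
  have hkr_pos : ∀ j : Fin ℓ, j ≠ 0 → 0 < discSep A j + rowSumOff A j := fun j hj => by
    have := hkpos j hj; have := hrn j; linarith
  have hρ_ge : ∀ j : Fin ℓ, j ≠ 0 →
      rowSumOff A 0 * rowSumOff A j / (discSep A j + rowSumOff A j) ≤ ρ := by
    intro j hj
    refine Finset.le_max' _ _ ?_
    exact Finset.mem_image_of_mem _ (by simp [hj])
  obtain ⟨jm, hjmE, hjmρ⟩ : ∃ jm ∈ Finset.univ.erase (0 : Fin ℓ),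
      rowSumOff A 0 * rowSumOff A jm / (discSep A jm + rowSumOff A jm) = ρ := by
    have hmem := Finset.max'_mem _ (hEsne.image
      (fun j => rowSumOff A 0 * rowSumOff A j / (discSep A j + rowSumOff A j)))
    rw [Finset.mem_image] at hmem
    obtain ⟨jm, h1, h2⟩ := hmem
    exact ⟨jm, h1, h2⟩
  have hjm0 : jm ≠ 0 := (Finset.mem_erase.mp hjmE).1
  have hρ0 : 0 ≤ ρ := by
    rw [← hjmρ]
    exact div_nonneg (mul_nonneg hr0n (hrn _)) (hkr_pos jm hjm0).le
  have hρ_half : 2 * ρ ≤ rowSumOff A 0 := by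
    rw [← hjmρ]
    have he : 2 * (rowSumOff A 0 * rowSumOff A jm / (discSep A jm + rowSumOff A jm))
        = (2 * (rowSumOff A 0 * rowSumOff A jm)) / (discSep A jm + rowSumOff A jm) := by ring
    rw [he, div_le_iff₀ (hkr_pos jm hjm0)]
    nlinarith [mul_le_mul_of_nonneg_left (h jm hjm0).le hr0n]
  have hρ_le_r0 : ρ ≤ rowSumOff A 0 := by linarith
  have hρ_le_M : ρ ≤ M := by
    rw [← hjmρ]
    refine le_trans ?_ (hterm_le_M jm hjm0)
    gcongr
    · exact mul_nonneg hr0n (hrn jm)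
    · exact hkpos jm hjm0
    · linarith [hrn jm]
  have hregM : ∀ z : ℂ, ‖z - A 0 0‖ ≤ M → ∀ j : Fin ℓ, j ≠ 0 →
      rowSumOff A j < ‖z - A j j‖ := by
    intro z hz j hj
    have h1 := hlow z M hz j hj
    have h2 := hkpos j hj
    linarith
  have hregρ : ∀ z : ℂ, ‖z - A 0 0‖ ≤ ρ → ∀ j : Fin ℓ, j ≠ 0 →
      rowSumOff A j < ‖z - A j j‖ :=
    fun z hz => hregM z (le_trans hz hρ_le_M)
  have hlowρ : ∀ z : ℂ, ‖z - A 0 0‖ ≤ ρ → ∀ j : Fin ℓ, j ≠ 0 →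
      discSep A j + rowSumOff A j + rowSumOff A 0 / 2 ≤ ‖z - A j j‖ := by
    intro z hz j hj
    have := hlow z ρ hz j hj
    linarith
  -- the auxiliary maximum s and invariance of the closed ball of radius ρ under phi
  set s := ((Finset.univ.erase (0 : Fin ℓ)).image
      (fun j => rowSumOff A j / (discSep A j + rowSumOff A j + rowSumOff A 0 / 2))).max'
      (hEsne.image _) with hsd
  have hsden_pos : ∀ j : Fin ℓ, j ≠ 0 →
      0 < discSep A j + rowSumOff A j + rowSumOff A 0 / 2 := fun j hj => by
    have := hkpos j hj; have := hrn j; linarith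
  have hs_ge : ∀ j : Fin ℓ, j ≠ 0 →
      rowSumOff A j / (discSep A j + rowSumOff A j + rowSumOff A 0 / 2) ≤ s := by
    intro j hj
    refine Finset.le_max' _ _ ?_
    exact Finset.mem_image_of_mem _ (by simp [hj])
  obtain ⟨js, hjsE, hjss⟩ : ∃ js ∈ Finset.univ.erase (0 : Fin ℓ),
      rowSumOff A js / (discSep A js + rowSumOff A js + rowSumOff A 0 / 2) = s := by
    have hmem := Finset.max'_mem _ (hEsne.image
      (fun j => rowSumOff A j / (discSep A j + rowSumOff A j + rowSumOff A 0 / 2)))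
    rw [Finset.mem_image] at hmem
    obtain ⟨js, h1, h2⟩ := hmem
    exact ⟨js, h1, h2⟩
  have hjs0 : js ≠ 0 := (Finset.mem_erase.mp hjsE).1
  have hs0 : 0 ≤ s := by
    rw [← hjss]; exact div_nonneg (hrn js) (hsden_pos js hjs0).le
  have hr0s : rowSumOff A 0 * s ≤ ρ := by
    rw [← hjss, mul_div_assoc', div_le_iff₀ (hsden_pos js hjs0)]
    have h1 := hρ_ge js hjs0
    rw [div_le_iff₀ (hkr_pos js hjs0)] at h1
    nlinarith [hρ0, hr0n]
  have hphi_mem : ∀ z : ℂ, ‖z - A 0 0‖ ≤ ρ →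
      ‖GBaux.phi A z - A 0 0‖ ≤ ρ := by
    intro z hz
    have hreg := hregρ z hz
    have hxb := GBaux.xv_bound A hℓ z hreg
    have hxs : ∀ j : Fin ℓ, j ≠ 0 → ‖GBaux.xv A z j‖ ≤ s := by
      intro j hj
      refine le_trans ?_ (hs_ge j hj)
      rw [le_div_iff₀ (hsden_pos j hj)]
      calc ‖GBaux.xv A z j‖ * (discSep A j + rowSumOff A j + rowSumOff A 0 / 2)
          ≤ ‖GBaux.xv A z j‖ * ‖z - A j j‖ :=
            mul_le_mul_of_nonneg_left (hlowρ z hz j hj) (norm_nonneg _)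
        _ ≤ rowSumOff A j := hxb j hj
    have hsum : ‖GBaux.phi A z - A 0 0‖
        ≤ ∑ j ∈ Finset.univ.erase (0 : Fin ℓ), ‖A 0 j‖ * s := by
      rw [GBaux.phi, add_sub_cancel_left]
      refine le_trans (norm_sum_le _ _) ?_
      apply Finset.sum_le_sum
      intro j hj
      rw [norm_mul]
      exact mul_le_mul_of_nonneg_left (hxs j (Finset.mem_erase.mp hj).1)
        (norm_nonneg _)
    rw [← Finset.sum_mul] at hsum
    exact le_trans hsum hr0s
  -- the Lipschitz constant Lq
  set Lq := ((Finset.univ.erase (0 : Fin ℓ)).image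
      (fun j => rowSumOff A 0 * rowSumOff A j /
        ((discSep A j + rowSumOff A 0 / 2) *
          (discSep A j + rowSumOff A j + rowSumOff A 0 / 2)))).max' (hEsne.image _) with hLqd
  have hLden_pos : ∀ j : Fin ℓ, j ≠ 0 →
      0 < (discSep A j + rowSumOff A 0 / 2) *
        (discSep A j + rowSumOff A j + rowSumOff A 0 / 2) := fun j hj =>
    mul_pos (by have := hkpos j hj; linarith) (hsden_pos j hj)
  have hLq_ge : ∀ j : Fin ℓ, j ≠ 0 →
      rowSumOff A 0 * rowSumOff A j /
        ((discSep A j + rowSumOff A 0 / 2) *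
          (discSep A j + rowSumOff A j + rowSumOff A 0 / 2)) ≤ Lq := by
    intro j hj
    refine Finset.le_max' _ _ ?_
    exact Finset.mem_image_of_mem _ (by simp [hj])
  have hLq0 : 0 ≤ Lq := by
    refine le_trans ?_ (hLq_ge ⟨1, by omega⟩ hone)
    exact div_nonneg (mul_nonneg hr0n (hrn _)) (hLden_pos _ hone).le
  have hprod_gt : ∀ j : Fin ℓ, j ≠ 0 → rowSumOff A 0 * rowSumOff A j <
      (discSep A j + rowSumOff A 0 / 2) *
        (discSep A j + rowSumOff A j + rowSumOff A 0 / 2) := by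
    intro j hj
    nlinarith [h j hj, hkpos j hj, hrn j, hr0n,
      mul_le_mul_of_nonneg_left (h j hj).le hr0n,
      mul_pos (hkpos j hj) (hkpos j hj),
      mul_nonneg (hkpos j hj).le (hrn j), mul_nonneg (hkpos j hj).le hr0n,
      sq_nonneg (rowSumOff A 0)]
  have hLq1 : Lq < 1 := by
    rw [hLqd, Finset.max'_lt_iff]
    intro y hy
    rw [Finset.mem_image] at hy
    obtain ⟨j, hjE, rfl⟩ := hy
    have hj : j ≠ 0 := (Finset.mem_erase.mp hjE).1
    rw [div_lt_one (hLden_pos j hj)]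
    exact hprod_gt j hj
  -- the Lipschitz estimate for phi on the closed ball of radius ρ
  have hlip : ∀ z z' : ℂ, ‖z - A 0 0‖ ≤ ρ → ‖z' - A 0 0‖ ≤ ρ →
      ‖GBaux.phi A z - GBaux.phi A z'‖ ≤ Lq * ‖z - z'‖ := by
    intro z z' hz hz'
    have hreg := hregρ z hz
    have hreg' := hregρ z' hz'
    have hx0 := GBaux.xv_zero A hℓ z hreg
    have hx0' := GBaux.xv_zero A hℓ z' hreg'
    set d : Fin ℓ → ℂ := fun i => GBaux.xv A z i - GBaux.xv A z' i with hdd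
    have hd0 : d 0 = 0 := by rw [hdd]; simp [hx0, hx0']
    have heqd : ∀ j : Fin ℓ, j ≠ 0 → (z - A j j) * d j =
        (∑ j' ∈ (Finset.univ.erase j).erase 0, A j j' * d j')
          + (-((z - z') * GBaux.xv A z' j)) := by
      intro j hj
      have h1 := GBaux.xv_row A hℓ z hreg j hj
      have h2 := GBaux.xv_row A hℓ z' hreg' j hj
      have h0mem : (0 : Fin ℓ) ∈ Finset.univ.erase j :=
        Finset.mem_erase.mpr ⟨Ne.symm hj, Finset.mem_univ 0⟩
      have hsum : ∑ j' ∈ (Finset.univ.erase j).erase 0, A j j' * d j'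
          = (∑ j' ∈ Finset.univ.erase j, A j j' * GBaux.xv A z j')
            - ∑ j' ∈ Finset.univ.erase j, A j j' * GBaux.xv A z' j' := by
        have e1 : (∑ j' ∈ (Finset.univ.erase j).erase 0, A j j' * d j') + A j 0 * d 0
            = ∑ j' ∈ Finset.univ.erase j, A j j' * d j' :=
          Finset.sum_erase_add _ _ h0mem
        rw [hd0, mul_zero, add_zero] at e1
        rw [e1, ← Finset.sum_sub_distrib]
        exact Finset.sum_congr rfl fun j' _ => by rw [hdd]; ring
      rw [hsum, ← h1, ← h2, hdd]
      ring
    obtain ⟨j₁, hj₁, hdb⟩ := GBaux.supbound A hℓ z d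
      (fun j => -((z - z') * GBaux.xv A z' j)) hd0 heqd hreg
    have hden : discSep A j₁ + rowSumOff A 0 / 2
        ≤ ‖z - A j₁ j₁‖ - rowSumOff A j₁ := by
      have := hlowρ z hz j₁ hj₁; linarith
    have hdenpos : 0 < ‖z - A j₁ j₁‖ - rowSumOff A j₁ := by
      have := hkpos j₁ hj₁; linarith
    have hw : ‖-((z - z') * GBaux.xv A z' j₁)‖
        = ‖z - z'‖ * ‖GBaux.xv A z' j₁‖ := by
      rw [norm_neg, norm_mul]
    have hX : ‖GBaux.xv A z' j₁‖
        * (discSep A j₁ + rowSumOff A j₁ + rowSumOff A 0 / 2) ≤ rowSumOff A j₁ := by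
      calc ‖GBaux.xv A z' j₁‖
            * (discSep A j₁ + rowSumOff A j₁ + rowSumOff A 0 / 2)
          ≤ ‖GBaux.xv A z' j₁‖ * ‖z' - A j₁ j₁‖ :=
            mul_le_mul_of_nonneg_left (hlowρ z' hz' j₁ hj₁) (norm_nonneg _)
        _ ≤ rowSumOff A j₁ := GBaux.xv_bound A hℓ z' hreg' j₁ hj₁
    have hdj : ∀ j : Fin ℓ, j ≠ 0 → ‖d j‖
        ≤ ‖z - z'‖ * ‖GBaux.xv A z' j₁‖
          / (‖z - A j₁ j₁‖ - rowSumOff A j₁) := by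
      intro j hj
      rw [le_div_iff₀ hdenpos]
      have := hdb j hj
      rwa [hw] at this
    have hphid : GBaux.phi A z - GBaux.phi A z'
        = ∑ j ∈ Finset.univ.erase (0 : Fin ℓ), A 0 j * d j := by
      rw [GBaux.phi, GBaux.phi, add_sub_add_left_eq_sub, ← Finset.sum_sub_distrib]
      exact Finset.sum_congr rfl fun j' _ => by rw [hdd]; ring
    have hchain : ‖GBaux.phi A z - GBaux.phi A z'‖
        ≤ rowSumOff A 0 * (‖z - z'‖ * ‖GBaux.xv A z' j₁‖
          / (‖z - A j₁ j₁‖ - rowSumOff A j₁)) := by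
      rw [hphid]
      calc ‖∑ j ∈ Finset.univ.erase (0 : Fin ℓ), A 0 j * d j‖
          ≤ ∑ j ∈ Finset.univ.erase (0 : Fin ℓ), ‖A 0 j‖ * ‖d j‖ := by
            refine le_trans (norm_sum_le _ _) (Finset.sum_le_sum ?_)
            intro j _; rw [norm_mul]
        _ ≤ ∑ j ∈ Finset.univ.erase (0 : Fin ℓ), ‖A 0 j‖
              * (‖z - z'‖ * ‖GBaux.xv A z' j₁‖
                / (‖z - A j₁ j₁‖ - rowSumOff A j₁)) := by
            refine Finset.sum_le_sum ?_
            intro j hj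
            exact mul_le_mul_of_nonneg_left (hdj j (Finset.mem_erase.mp hj).1)
              (norm_nonneg _)
        _ = rowSumOff A 0 * (‖z - z'‖ * ‖GBaux.xv A z' j₁‖
              / (‖z - A j₁ j₁‖ - rowSumOff A j₁)) := by
            rw [← Finset.sum_mul]; rfl
    refine le_trans hchain ?_
    -- now: r0 * (|z-z'| * X / den) ≤ Lq * |z-z'|
    have hXn : 0 ≤ ‖GBaux.xv A z' j₁‖ := norm_nonneg _
    have hC2 : 0 < discSep A j₁ + rowSumOff A j₁ + rowSumOff A 0 / 2 := hsden_pos j₁ hj₁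
    have hC1 : 0 < discSep A j₁ + rowSumOff A 0 / 2 := by have := hkpos j₁ hj₁; linarith
    have hXb : ‖GBaux.xv A z' j₁‖
        ≤ rowSumOff A j₁ / (discSep A j₁ + rowSumOff A j₁ + rowSumOff A 0 / 2) := by
      rw [le_div_iff₀ hC2]; exact hX
    have hstep : rowSumOff A 0 * ‖GBaux.xv A z' j₁‖
          / (‖z - A j₁ j₁‖ - rowSumOff A j₁) ≤ Lq := by
      calc rowSumOff A 0 * ‖GBaux.xv A z' j₁‖
            / (‖z - A j₁ j₁‖ - rowSumOff A j₁)
          ≤ rowSumOff A 0 * ‖GBaux.xv A z' j₁‖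
            / (discSep A j₁ + rowSumOff A 0 / 2) := by
            gcongr
        _ ≤ rowSumOff A 0 * (rowSumOff A j₁ / (discSep A j₁ + rowSumOff A j₁
              + rowSumOff A 0 / 2)) / (discSep A j₁ + rowSumOff A 0 / 2) := by
            gcongr
        _ = rowSumOff A 0 * rowSumOff A j₁ /
              ((discSep A j₁ + rowSumOff A 0 / 2) *
                (discSep A j₁ + rowSumOff A j₁ + rowSumOff A 0 / 2)) := by
            field_simp
        _ ≤ Lq := hLq_ge j₁ hj₁
    calc rowSumOff A 0 * (‖z - z'‖ * ‖GBaux.xv A z' j₁‖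
          / (‖z - A j₁ j₁‖ - rowSumOff A j₁))
        = (rowSumOff A 0 * ‖GBaux.xv A z' j₁‖
          / (‖z - A j₁ j₁‖ - rowSumOff A j₁)) * ‖z - z'‖ := by
          ring
      _ ≤ Lq * ‖z - z'‖ :=
          mul_le_mul_of_nonneg_right hstep (norm_nonneg _)
  -- Banach fixed point on the closed ball
  have hmemball : ∀ z : ℂ, z ∈ Metric.closedBall (A 0 0) ρ ↔ ‖z - A 0 0‖ ≤ ρ := by
    intro z; rw [Metric.mem_closedBall, Complex.dist_eq]
  haveI : CompleteSpace (Metric.closedBall (A 0 0) ρ) :=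
    Metric.isClosed_closedBall.completeSpace_coe
  haveI : Nonempty (Metric.closedBall (A 0 0) ρ) :=
    ⟨⟨A 0 0, Metric.mem_closedBall_self hρ0⟩⟩
  set f : Metric.closedBall (A 0 0) ρ → Metric.closedBall (A 0 0) ρ :=
    fun w => ⟨GBaux.phi A w.1, (hmemball _).mpr (hphi_mem w.1 ((hmemball _).mp w.2))⟩ with hfd
  set K : NNReal := ⟨Lq, hLq0⟩ with hKd
  have hcontr : ContractingWith K f := by
    constructor
    · exact_mod_cast hLq1
    · apply LipschitzWith.of_dist_le_mul
      intro w w'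
      have hd : dist (f w) (f w') = ‖GBaux.phi A w.1 - GBaux.phi A w'.1‖ := by
        rw [Subtype.dist_eq, Complex.dist_eq]
      rw [hd, Subtype.dist_eq, Complex.dist_eq]
      exact hlip w.1 w'.1 ((hmemball _).mp w.2) ((hmemball _).mp w'.2)
  set μfix := ContractingWith.fixedPoint f hcontr with hμd
  have hfix : GBaux.phi A (μfix : ℂ) = (μfix : ℂ) :=
    congrArg Subtype.val hcontr.fixedPoint_isFixedPt
  have hμball : ‖(μfix : ℂ) - A 0 0‖ ≤ ρ := (hmemball _).mp μfix.2
  have hregμ := hregρ (μfix : ℂ) hμball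
  have hxrowμ := GBaux.xv_row A hℓ (μfix : ℂ) hregμ
  have hx0μ := GBaux.xv_zero A hℓ (μfix : ℂ) hregμ
  have heig : ((μfix : ℂ) • (1 : Matrix (Fin ℓ) (Fin ℓ) ℂ) - A).mulVec
      (GBaux.xv A (μfix : ℂ)) = 0 := by
    funext i
    rw [GBaux.mulVec_row, Pi.zero_apply, sub_eq_zero]
    by_cases hi : i = 0
    · subst hi
      rw [hx0μ, mul_one]
      have hfix' := hfix
      rw [GBaux.phi] at hfix'
      linear_combination -hfix' 
    · exact hxrowμ i hi
  have hdet0 : ((μfix : ℂ) • (1 : Matrix (Fin ℓ) (Fin ℓ) ℂ) - A).det = 0 := by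
    refine Matrix.exists_mulVec_eq_zero_iff.mp ⟨GBaux.xv A (μfix : ℂ), ?_, heig⟩
    intro h0
    have := congrFun h0 0
    rw [hx0μ] at this
    simpa using this
  have hroot : A.charpoly.IsRoot (μfix : ℂ) := (GBaux.charpoly_isRoot_iff A _).mpr hdet0
  -- normalized eigenvector extraction for arbitrary roots
  have hEV : ∀ ν : ℂ, A.charpoly.IsRoot ν →
      (∀ j : Fin ℓ, j ≠ 0 → rowSumOff A j < ‖ν - A j j‖) →
      ∃ x : Fin ℓ → ℂ, x 0 = 1 ∧
        (∀ i : Fin ℓ, (ν - A i i) * x i = ∑ j' ∈ Finset.univ.erase i, A i j' * x j') ∧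
        (∀ j : Fin ℓ, j ≠ 0 →
          ‖x j‖ * ‖ν - A j j‖ ≤ rowSumOff A j) := by
    intro ν hν hregν
    obtain ⟨v, hvne, hveq⟩ := Matrix.exists_mulVec_eq_zero_iff.mpr
      ((GBaux.charpoly_isRoot_iff A ν).mp hν)
    have hrows : ∀ i : Fin ℓ, (ν - A i i) * v i
        = ∑ j' ∈ Finset.univ.erase i, A i j' * v j' := by
      intro i
      have := congrFun hveq i
      rwa [GBaux.mulVec_row, Pi.zero_apply, sub_eq_zero] at this
    have hb := GBaux.rowbound A hℓ ν v (fun j _ => hrows j) hregν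
    have hv0 : v 0 ≠ 0 := by
      intro h0
      apply hvne
      funext j
      by_cases hj : j = 0
      · rw [hj, h0]; rfl
      · have h1 := hb j hj
        rw [h0, norm_zero, mul_zero] at h1
        have h2 : 0 < ‖ν - A j j‖ := lt_of_le_of_lt (hrn j) (hregν j hj)
        have h3 : ‖v j‖ ≤ 0 := by
          nlinarith [norm_nonneg (v j)]
        exact norm_eq_zero.mp (le_antisymm h3 (norm_nonneg _))
    refine ⟨fun i => v i / v 0, div_self hv0, ?_, ?_⟩
    · intro i
      calc (ν - A i i) * (v i / v 0) = ((ν - A i i) * v i) / v 0 := by ring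
        _ = (∑ j' ∈ Finset.univ.erase i, A i j' * v j') / v 0 := by rw [hrows i]
        _ = ∑ j' ∈ Finset.univ.erase i, A i j' * (v j' / v 0) := by
            rw [Finset.sum_div]
            exact Finset.sum_congr rfl fun j' _ => by ring
    · intro j hj
      have h1 := hb j hj
      have hvpos : 0 < ‖v 0‖ := norm_pos_iff.mpr hv0
      rw [norm_div, div_mul_eq_mul_div, div_le_iff₀ hvpos]
      exact h1
  -- any root within the coarse bound M is within the fine bound ρ
  have hU1 : ∀ ν : ℂ, A.charpoly.IsRoot ν → ‖ν - A 0 0‖ ≤ M →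
      ‖ν - A 0 0‖ ≤ ρ := by
    intro ν hν hbd
    have hregν := hregM ν hbd
    obtain ⟨x, hx1, hxr, hxb⟩ := hEV ν hν hregν
    obtain ⟨j₂, hj₂E, hmax⟩ := Finset.exists_max_image (Finset.univ.erase (0 : Fin ℓ))
      (fun j => ‖x j‖) hEsne
    have hj₂ : j₂ ≠ 0 := (Finset.mem_erase.mp hj₂E).1
    have habs0 : ‖ν - A 0 0‖ ≤ rowSumOff A 0 * ‖x j₂‖ := by
      have hrow0 := hxr 0
      rw [hx1, mul_one] at hrow0
      calc ‖ν - A 0 0‖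
          = ‖∑ j' ∈ Finset.univ.erase (0 : Fin ℓ), A 0 j' * x j'‖ := by
            rw [hrow0]
        _ ≤ ∑ j' ∈ Finset.univ.erase (0 : Fin ℓ),
              ‖A 0 j'‖ * ‖x j'‖ := by
            refine le_trans (norm_sum_le _ _) (Finset.sum_le_sum ?_)
            intro j' _; rw [norm_mul]
        _ ≤ ∑ j' ∈ Finset.univ.erase (0 : Fin ℓ),
              ‖A 0 j'‖ * ‖x j₂‖ := by
            refine Finset.sum_le_sum ?_
            intro j' hj'
            exact mul_le_mul_of_nonneg_left (hmax j' hj') (norm_nonneg _)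
        _ = rowSumOff A 0 * ‖x j₂‖ := by rw [← Finset.sum_mul]; rfl
    have hb2 := hxb j₂ hj₂
    have hlb : discSep A j₂ + rowSumOff A j₂ ≤ ‖ν - A j₂ j₂‖ := by
      have := hlow ν M hbd j₂ hj₂
      linarith
    have hXn : 0 ≤ ‖x j₂‖ := norm_nonneg _
    have hkey : ‖ν - A 0 0‖ * (discSep A j₂ + rowSumOff A j₂)
        ≤ rowSumOff A 0 * rowSumOff A j₂ := by
      have t1 : ‖ν - A 0 0‖ * (discSep A j₂ + rowSumOff A j₂)
          ≤ rowSumOff A 0 * ‖x j₂‖ * (discSep A j₂ + rowSumOff A j₂) :=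
        mul_le_mul_of_nonneg_right habs0 (hkr_pos j₂ hj₂).le
      have t2 : rowSumOff A 0 * ‖x j₂‖ * (discSep A j₂ + rowSumOff A j₂)
          ≤ rowSumOff A 0 * (‖x j₂‖ * ‖ν - A j₂ j₂‖) := by
        rw [mul_assoc]
        exact mul_le_mul_of_nonneg_left
          (mul_le_mul_of_nonneg_left hlb hXn) hr0n
      have t3 : rowSumOff A 0 * (‖x j₂‖ * ‖ν - A j₂ j₂‖)
          ≤ rowSumOff A 0 * rowSumOff A j₂ :=
        mul_le_mul_of_nonneg_left hb2 hr0n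
      linarith
    have hge := hρ_ge j₂ hj₂
    rw [div_le_iff₀ (hkr_pos j₂ hj₂)] at hge
    exact le_of_mul_le_mul_right (le_trans hkey hge) (hkr_pos j₂ hj₂)
  -- uniqueness
  have huniq : ∀ ν : ℂ, A.charpoly.IsRoot ν → ‖ν - A 0 0‖ ≤ M →
      ν = (μfix : ℂ) := by
    intro ν hν hbd
    by_contra hne
    have hνρ : ‖ν - A 0 0‖ ≤ ρ := hU1 ν hν hbd
    have hregν := hregρ ν hνρ
    obtain ⟨x, hx1, hxr, hxb⟩ := hEV ν hν hregν
    obtain ⟨y, hy1, hyr, hyb⟩ := hEV (μfix : ℂ) hroot hregμ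
    set dd : Fin ℓ → ℂ := fun i => y i - x i with hddd
    have hd0 : dd 0 = 0 := by rw [hddd]; simp [hx1, hy1]
    have heqd : ∀ j : Fin ℓ, j ≠ 0 → ((μfix : ℂ) - A j j) * dd j =
        (∑ j' ∈ (Finset.univ.erase j).erase 0, A j j' * dd j')
          + (-(((μfix : ℂ) - ν) * x j)) := by
      intro j hj
      have h0mem : (0 : Fin ℓ) ∈ Finset.univ.erase j :=
        Finset.mem_erase.mpr ⟨Ne.symm hj, Finset.mem_univ 0⟩
      have hsum : ∑ j' ∈ (Finset.univ.erase j).erase 0, A j j' * dd j'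
          = (∑ j' ∈ Finset.univ.erase j, A j j' * y j')
            - ∑ j' ∈ Finset.univ.erase j, A j j' * x j' := by
        have e1 : (∑ j' ∈ (Finset.univ.erase j).erase 0, A j j' * dd j') + A j 0 * dd 0
            = ∑ j' ∈ Finset.univ.erase j, A j j' * dd j' :=
          Finset.sum_erase_add _ _ h0mem
        rw [hd0, mul_zero, add_zero] at e1
        rw [e1, ← Finset.sum_sub_distrib]
        exact Finset.sum_congr rfl fun j' _ => by rw [hddd]; ring
      rw [hsum, ← hyr j, ← hxr j, hddd]
      ring
    obtain ⟨j₁, hj₁, hdb⟩ := GBaux.supbound A hℓ (μfix : ℂ) dd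
      (fun j => -(((μfix : ℂ) - ν) * x j)) hd0 heqd hregμ
    have hden : discSep A j₁ + rowSumOff A 0 / 2
        ≤ ‖(μfix : ℂ) - A j₁ j₁‖ - rowSumOff A j₁ := by
      have := hlowρ (μfix : ℂ) hμball j₁ hj₁; linarith
    have hdenn : 0 ≤ ‖(μfix : ℂ) - A j₁ j₁‖ - rowSumOff A j₁ := by
      have := hkpos j₁ hj₁; linarith
    have hrow0d : (μfix : ℂ) - ν = ∑ j ∈ Finset.univ.erase (0 : Fin ℓ), A 0 j * dd j := by
      have ha := hyr 0
      have hbb := hxr 0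
      rw [hy1, mul_one] at ha
      rw [hx1, mul_one] at hbb
      calc (μfix : ℂ) - ν = ((μfix : ℂ) - A 0 0) - (ν - A 0 0) := by ring
        _ = (∑ j ∈ Finset.univ.erase (0 : Fin ℓ), A 0 j * y j)
            - ∑ j ∈ Finset.univ.erase (0 : Fin ℓ), A 0 j * x j := by rw [← ha, ← hbb]
        _ = ∑ j ∈ Finset.univ.erase (0 : Fin ℓ), A 0 j * dd j := by
            rw [← Finset.sum_sub_distrib]
            exact Finset.sum_congr rfl fun j' _ => by rw [hddd]; ring
    set T := ‖(μfix : ℂ) - ν‖ with hTd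
    set X := ‖x j₁‖ with hXd
    have hTpos : 0 < T := norm_pos_iff.mpr (sub_ne_zero.mpr fun hc => hne hc.symm)
    have hXn : 0 ≤ X := norm_nonneg _
    have hw : ‖-(((μfix : ℂ) - ν) * x j₁)‖ = T * X := by
      rw [norm_neg, norm_mul]
    -- sum bound
    have hTS : T ≤ ∑ j ∈ Finset.univ.erase (0 : Fin ℓ),
        ‖A 0 j‖ * ‖dd j‖ := by
      calc T = ‖∑ j ∈ Finset.univ.erase (0 : Fin ℓ), A 0 j * dd j‖ := by
            rw [hTd, hrow0d]
        _ ≤ _ := by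
            refine le_trans (norm_sum_le _ _) (Finset.sum_le_sum ?_)
            intro j' _; rw [norm_mul]
    have hSd : (∑ j ∈ Finset.univ.erase (0 : Fin ℓ),
        ‖A 0 j‖ * ‖dd j‖)
          * (‖(μfix : ℂ) - A j₁ j₁‖ - rowSumOff A j₁)
        ≤ rowSumOff A 0 * (T * X) := by
      rw [Finset.sum_mul]
      have : ∀ j ∈ Finset.univ.erase (0 : Fin ℓ),
          ‖A 0 j‖ * ‖dd j‖
            * (‖(μfix : ℂ) - A j₁ j₁‖ - rowSumOff A j₁)
          ≤ ‖A 0 j‖ * (T * X) := by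
        intro j hj
        rw [mul_assoc]
        refine mul_le_mul_of_nonneg_left ?_ (norm_nonneg _)
        have := hdb j (Finset.mem_erase.mp hj).1
        rwa [hw] at this
      refine le_trans (Finset.sum_le_sum this) ?_
      rw [← Finset.sum_mul]
      rfl
    have hTden : T * (‖(μfix : ℂ) - A j₁ j₁‖ - rowSumOff A j₁)
        ≤ rowSumOff A 0 * (T * X) :=
      le_trans (mul_le_mul_of_nonneg_right hTS hdenn) hSd
    -- the bound on X
    have hXj : X * (discSep A j₁ + rowSumOff A j₁ + rowSumOff A 0 / 2)
        ≤ rowSumOff A j₁ := by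
      calc X * (discSep A j₁ + rowSumOff A j₁ + rowSumOff A 0 / 2)
          ≤ X * ‖ν - A j₁ j₁‖ :=
            mul_le_mul_of_nonneg_left (hlowρ ν hνρ j₁ hj₁) hXn
        _ ≤ rowSumOff A j₁ := hxb j₁ hj₁
    -- contradiction
    have hC1C2 := hprod_gt j₁ hj₁
    have hC2pos := hsden_pos j₁ hj₁
    have hC1pos : (0:ℝ) < discSep A j₁ + rowSumOff A 0 / 2 := by
      have := hkpos j₁ hj₁; linarith
    nlinarith [mul_le_mul_of_nonneg_right hTden hC2pos.le,
      mul_le_mul_of_nonneg_left hXj (mul_nonneg hr0n hTpos.le),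
      mul_le_mul_of_nonneg_right (mul_le_mul_of_nonneg_left hden hTpos.le) hC2pos.le,
      mul_lt_mul_of_pos_left hC1C2 hTpos]
  -- conclusion
  refine ⟨(μfix : ℂ), ⟨hroot, le_trans hμball hρ_le_M⟩, ?_⟩
  rintro ν ⟨hν, hbd⟩
  exact huniq ν hν hbd
end

section
/- Let ε ∈ (0, 1/3), let ℓ ≥ 1, and let A be an ℓ × ℓ complex matrix (rows and columns indexed by 0, …, ℓ−1) with nonnegative real entries such that A_{0,0} = 1 − ε and Σ_{i,j} A_{i,j} = 1. Then A has an eigenvalue μ satisfying |μ − (1 − ε)| ≤ ε² / (1 − 2ε), and every eigenvalue λ of A with λ ≠ μ satisfies |λ| ≤ ε; in particular μ is the unique eigenvalue of maximal modulus. -/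
open scoped BigOperators

open Polynomial Matrix Finset

section DomEigAux

lemma domEig_charpoly_eval_det {n : Type*} [Fintype n] [DecidableEq n] {R : Type*} [CommRing R]
    (M : Matrix n n R) (μ : R) :
    M.charpoly.eval μ = (Matrix.scalar n μ - M).det := by
  rw [Matrix.charpoly, _root_.eval_det, matPolyEquiv_charmatrix]
  simp

lemma domEig_exists_eigvec {n : Type*} [Fintype n] [DecidableEq n] {K : Type*} [Field K]
    (M : Matrix n n K) {μ : K}
    (h : M.charpoly.IsRoot μ) : ∃ v, v ≠ 0 ∧ M *ᵥ v = μ • v := by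
  have hdet : (Matrix.scalar n μ - M).det = 0 := by rw [← domEig_charpoly_eval_det]; exact h
  obtain ⟨v, hv0, hv⟩ := (Matrix.exists_mulVec_eq_zero_iff).mpr hdet
  refine ⟨v, hv0, ?_⟩
  have h2 : (Matrix.scalar n μ) *ᵥ v - M *ᵥ v = 0 := by rw [← Matrix.sub_mulVec]; exact hv
  have h3 : (Matrix.scalar n μ) *ᵥ v = μ • v := by
    ext i; simp [Matrix.scalar, Matrix.mulVec_diagonal]
  rw [h3] at h2
  exact (sub_eq_zero.mp h2).symm

lemma domEig_root_pow_bound {ℓ : ℕ} (A : Matrix (Fin ℓ) (Fin ℓ) ℂ) {ε : ℝ}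
    {m : ℕ} (hm : 1 ≤ m)
    (hroots : ∀ z : ℂ, A.charpoly.IsRoot z → ‖z‖ ≤ ε)
    {z : ℂ} (hz : (A ^ m).charpoly.IsRoot z) : ‖z‖ ≤ ε ^ m := by
  have hdet : (Matrix.scalar (Fin ℓ) z - A ^ m).det = 0 := by
    rw [← domEig_charpoly_eval_det]; exact hz
  set p : ℂ[X] := X ^ m - C z with hp
  have hpm : p.Monic := monic_X_pow_sub_C z (by omega)
  set L : List ℂ := p.roots.toList with hL
  have hfact : p = (L.map fun a => X - C a).prod := by
    have h1 : p = (Multiset.map (fun a => X - C a) p.roots).prod :=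
      (IsAlgClosed.splits p).eq_prod_roots_of_monic hpm
    rw [h1, ← Multiset.coe_toList p.roots, Multiset.map_coe, Multiset.prod_coe]
  have haev2 : aeval A p = (L.map fun c => A - Matrix.scalar (Fin ℓ) c).prod := by
    conv_lhs => rw [hfact]
    rw [map_list_prod]
    congr 1
    rw [List.map_map]
    refine List.map_congr_left fun c _ => ?_
    rw [Function.comp_apply, map_sub, aeval_X, aeval_C]; rfl
  have hdet2 : (aeval A p).det = 0 := by
    have haev : (aeval A) p = A ^ m - Matrix.scalar (Fin ℓ) z := by
      rw [hp, map_sub, map_pow, aeval_X, aeval_C]; rfl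
    rw [haev, show A ^ m - Matrix.scalar (Fin ℓ) z = -(Matrix.scalar (Fin ℓ) z - A ^ m) from
      (neg_sub _ _).symm, Matrix.det_neg, hdet, mul_zero]
  have hprod : ((L.map fun c => A - Matrix.scalar (Fin ℓ) c).map Matrix.det).prod = 0 := by
    have h3 := map_list_prod (Matrix.detMonoidHom (n := Fin ℓ) (R := ℂ)) (L.map fun c => A - Matrix.scalar (Fin ℓ) c)
    simp only [Matrix.coe_detMonoidHom] at h3
    rw [← h3, ← haev2]
    exact hdet2
  have hmem : (0 : ℂ) ∈ (L.map fun c => A - Matrix.scalar (Fin ℓ) c).map Matrix.det :=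
    List.prod_eq_zero_iff.mp hprod
  obtain ⟨M0, hM0, hd0⟩ := List.mem_map.mp hmem
  obtain ⟨c, hc, rfl⟩ := List.mem_map.mp hM0
  have hcr : A.charpoly.IsRoot c := by
    have h0 : (A - Matrix.scalar (Fin ℓ) c).det = 0 := hd0
    have : (Matrix.scalar (Fin ℓ) c - A).det = 0 := by
      rw [show Matrix.scalar (Fin ℓ) c - A = -(A - Matrix.scalar (Fin ℓ) c) from
        (neg_sub _ _).symm, Matrix.det_neg, h0, mul_zero]
    rw [Polynomial.IsRoot, domEig_charpoly_eval_det]; exact this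
  have hcε : ‖c‖ ≤ ε := hroots c hcr
  have hcz : c ^ m = z := by
    have hc' : c ∈ p.roots := by rwa [hL, Multiset.mem_toList] at hc
    have h2 := (mem_roots (hpm.ne_zero)).mp hc'
    rw [hp] at h2
    simpa [sub_eq_zero] using h2
  rw [← hcz, norm_pow]
  exact pow_le_pow_left₀ (norm_nonneg c) hcε m

lemma domEig_pow_real_nonneg {ℓ : ℕ} (A : Matrix (Fin ℓ) (Fin ℓ) ℂ)
    (hnonneg : ∀ i j, 0 ≤ (A i j).re) (hreal : ∀ i j, (A i j).im = 0) :
    ∀ m, (∀ i j, 0 ≤ ((A ^ m) i j).re ∧ ((A ^ m) i j).im = 0) := by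
  intro m
  induction m with
  | zero => intro i j; simp [Matrix.one_apply]; split <;> simp
  | succ n ih =>
    intro i j
    rw [pow_succ]
    have he : ((A ^ n * A) i j) = ∑ k, (A ^ n) i k * A k j := by
      simp [Matrix.mul_apply]
    constructor
    · rw [he, Complex.re_sum]
      refine Finset.sum_nonneg fun k _ => ?_
      rw [Complex.mul_re, (ih i k).2, zero_mul, sub_zero]
      exact mul_nonneg (ih i k).1 (hnonneg k j)
    · rw [he, Complex.im_sum]
      refine Finset.sum_eq_zero fun k _ => ?_
      rw [Complex.mul_im, (ih i k).2, zero_mul, hreal k j, mul_zero, add_zero]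

lemma domEig_pow_diag_lb {ℓ : ℕ} [NeZero ℓ] {ε : ℝ} (hε' : 0 ≤ 1 - ε)
    (A : Matrix (Fin ℓ) (Fin ℓ) ℂ)
    (hnonneg : ∀ i j, 0 ≤ (A i j).re) (hreal : ∀ i j, (A i j).im = 0)
    (h00 : A 0 0 = 1 - (ε : ℂ)) :
    ∀ m, (1 - ε) ^ m ≤ ((A ^ m) 0 0).re := by
  have hP := domEig_pow_real_nonneg A hnonneg hreal
  intro m
  induction m with
  | zero => simp [Matrix.one_apply]
  | succ n ih =>
    have he : ((A ^ (n + 1)) 0 0) = ∑ k, (A ^ n) 0 k * A k 0 := by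
      rw [pow_succ]; simp [Matrix.mul_apply]
    rw [he, Complex.re_sum]
    have hterm : ∀ k, ((A ^ n) 0 k * A k 0).re = ((A ^ n) 0 k).re * (A k 0).re := by
      intro k; rw [Complex.mul_re, (hP n 0 k).2, zero_mul, sub_zero]
    calc (1 - ε) ^ (n + 1) = (1 - ε) ^ n * (1 - ε) := by ring
    _ ≤ ((A ^ n) 0 0).re * (A 0 0).re := by
        rw [h00]
        simp only [Complex.sub_re, Complex.one_re, Complex.ofReal_re]
        exact mul_le_mul ih le_rfl hε' (hP n 0 0).1
    _ = ((A ^ n) 0 0 * A 0 0).re := (hterm 0).symm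
    _ ≤ ∑ k, ((A ^ n) 0 k * A k 0).re := by
        refine Finset.single_le_sum (f := fun k => ((A ^ n) 0 k * A k 0).re) ?_ (mem_univ 0)
        intro k _
        show 0 ≤ ((A ^ n) 0 k * A k 0).re
        rw [hterm k]
        exact mul_nonneg (hP n 0 k).1 (hnonneg k 0)

lemma domEig_exists_big_root {ℓ : ℕ} [NeZero ℓ] (hℓ : 1 ≤ ℓ) {ε : ℝ}
    (hε0 : 0 < ε) (hε3 : ε < 1 / 3)
    (A : Matrix (Fin ℓ) (Fin ℓ) ℂ)
    (hnonneg : ∀ i j, 0 ≤ (A i j).re) (hreal : ∀ i j, (A i j).im = 0)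
    (h00 : A 0 0 = 1 - (ε : ℂ)) :
    ∃ z : ℂ, A.charpoly.IsRoot z ∧ ε < ‖z‖ := by
  by_contra hcon
  push_neg at hcon
  have hroots : ∀ z : ℂ, A.charpoly.IsRoot z → ‖z‖ ≤ ε := hcon
  have h1ε : (0:ℝ) < 1 - ε := by linarith
  have hrlt : ε / (1 - ε) < 1 := by rw [div_lt_one h1ε]; linarith
  obtain ⟨m, hmlt⟩ := exists_pow_lt_of_lt_one (show (0:ℝ) < 1 / ℓ by positivity) hrlt
  have hm1 : 1 ≤ m := by
    by_contra hm
    push_neg at hm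
    interval_cases m
    · simp at hmlt
      have h1 : (1:ℝ) ≤ ℓ := by exact_mod_cast hℓ
      have h2 : (ℓ:ℝ)⁻¹ ≤ 1 := by
        rw [inv_le_one_iff₀]; right; exact h1
      linarith
  have hkey : (ℓ : ℝ) * ε ^ m < (1 - ε) ^ m := by
    rw [div_pow, div_lt_div_iff₀ (by positivity)
      (by exact_mod_cast (show (0:ℝ) < ℓ by positivity))] at hmlt
    nlinarith [hmlt]
  have hP := domEig_pow_real_nonneg A hnonneg hreal m
  have htr_re : (1 - ε) ^ m ≤ ((A ^ m).trace).re := by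
    have h1 := domEig_pow_diag_lb (le_of_lt h1ε) A hnonneg hreal h00 m
    have h2 : ((A ^ m).trace).re = ∑ i, ((A ^ m) i i).re := by
      rw [Matrix.trace, Complex.re_sum]; rfl
    rw [h2]
    refine le_trans h1 (Finset.single_le_sum (f := fun i => ((A ^ m) i i).re)
      (fun i _ => (hP i i).1) (mem_univ 0))
  have htr_abs : ‖(A ^ m).trace‖ ≤ (ℓ : ℝ) * ε ^ m := by
    rw [Matrix.trace_eq_sum_roots_charpoly]
    have hb : ∀ x ∈ ((A ^ m).charpoly.roots.map (fun z : ℂ => ‖z‖)), x ≤ ε ^ m := by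
      intro x hx
      obtain ⟨z, hz, rfl⟩ := Multiset.mem_map.mp hx
      exact domEig_root_pow_bound A hm1 hroots
        ((mem_roots ((A ^ m).charpoly_monic.ne_zero)).mp hz)
    calc ‖(A ^ m).charpoly.roots.sum‖
        ≤ (((A ^ m).charpoly.roots).map (fun z : ℂ => ‖z‖)).sum := by
          simpa using norm_multiset_sum_le ((A ^ m).charpoly.roots)
      _ ≤ (((A ^ m).charpoly.roots).map (fun z : ℂ => ‖z‖)).card • (ε ^ m) :=
          Multiset.sum_le_card_nsmul _ _ hb
      _ ≤ (ℓ : ℝ) * ε ^ m := by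
          rw [nsmul_eq_mul, Multiset.card_map]
          have hcard : ((A ^ m).charpoly.roots).card ≤ ℓ := by
            refine le_trans ((A ^ m).charpoly.card_roots') ?_
            rw [Matrix.charpoly_natDegree_eq_dim]
            simp
          have hpow : (0:ℝ) ≤ ε ^ m := by positivity
          exact mul_le_mul_of_nonneg_right (by exact_mod_cast hcard) hpow
  have := le_trans htr_re (Complex.re_le_norm _)
  linarith

lemma domEig_abs_entry {ℓ : ℕ} (A : Matrix (Fin ℓ) (Fin ℓ) ℂ)
    (hnonneg : ∀ i j, 0 ≤ (A i j).re) (hreal : ∀ i j, (A i j).im = 0)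
    (i j : Fin ℓ) : ‖A i j‖ = (A i j).re := by
  have h1 : A i j = ((A i j).re : ℂ) := Complex.ext rfl (by simp [hreal i j])
  rw [h1, Complex.norm_real, Real.norm_eq_abs, abs_of_nonneg (hnonneg i j), Complex.ofReal_re]

lemma domEig_sum_abs_bound {ℓ : ℕ} (A : Matrix (Fin ℓ) (Fin ℓ) ℂ)
    (hnonneg : ∀ i j, 0 ≤ (A i j).re) (hreal : ∀ i j, (A i j).im = 0)
    (i : Fin ℓ) (t : Finset (Fin ℓ)) (x : Fin ℓ → ℂ) :
    ‖∑ j ∈ t, A i j * x j‖ ≤ ∑ j ∈ t, (A i j).re * ‖x j‖ := by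
  refine le_trans (norm_sum_le _ _) (Finset.sum_le_sum fun j _ => ?_)
  rw [norm_mul, domEig_abs_entry A hnonneg hreal]

lemma domEig_row_facts {ℓ : ℕ} [NeZero ℓ] {ε : ℝ} (A : Matrix (Fin ℓ) (Fin ℓ) ℂ)
    (hnonneg : ∀ i j, 0 ≤ (A i j).re)
    (h00 : A 0 0 = 1 - (ε : ℂ)) (hsum : ∑ i : Fin ℓ, ∑ j : Fin ℓ, A i j = 1) :
    0 ≤ (∑ j ∈ univ.erase 0, (A 0 j).re) ∧
    (∑ j ∈ univ.erase 0, (A 0 j).re) ≤ ε ∧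
    (∀ i : Fin ℓ, i ≠ 0 → ∑ j, (A i j).re ≤ ε - ∑ j ∈ univ.erase 0, (A 0 j).re) := by
  set s := ∑ j ∈ univ.erase 0, (A 0 j).re with hs
  have htot : ∑ i : Fin ℓ, ∑ j : Fin ℓ, (A i j).re = 1 := by
    have := congrArg Complex.re hsum
    rw [Complex.re_sum] at this
    simp only [Complex.re_sum] at this
    simpa using this
  have hrow0 : ∑ j, (A 0 j).re = (1 - ε) + s := by
    rw [hs, Finset.sum_erase_eq_sub (mem_univ (0 : Fin ℓ))]
    have h0 : (A 0 0).re = 1 - ε := by rw [h00]; simp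
    rw [h0]; ring
  have hrest : ∑ i ∈ univ.erase 0, ∑ j, (A i j).re = ε - s := by
    have h1 := Finset.add_sum_erase univ (fun i => ∑ j, (A i j).re) (mem_univ 0)
    beta_reduce at h1
    rw [htot] at h1
    linarith [hrow0, h1]
  have hrow_nonneg : ∀ i : Fin ℓ, 0 ≤ ∑ j, (A i j).re :=
    fun i => Finset.sum_nonneg fun j _ => hnonneg i j
  refine ⟨Finset.sum_nonneg fun j _ => hnonneg 0 j, ?_, ?_⟩
  · have h1 : 0 ≤ ε - s := by
      rw [← hrest]
      exact Finset.sum_nonneg fun i _ => hrow_nonneg i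
    linarith
  · intro i hi
    rw [← hrest]
    exact Finset.single_le_sum (fun j _ => hrow_nonneg j) (by simp [hi])

lemma domEig_key {ℓ : ℕ} [NeZero ℓ] {ε : ℝ} (A : Matrix (Fin ℓ) (Fin ℓ) ℂ)
    (hε0 : 0 < ε)
    (hnonneg : ∀ i j, 0 ≤ (A i j).re) (hreal : ∀ i j, (A i j).im = 0)
    (h00 : A 0 0 = 1 - (ε : ℂ)) (hsum : ∑ i : Fin ℓ, ∑ j : Fin ℓ, A i j = 1)
    {lam : ℂ} {v : Fin ℓ → ℂ} (hv : A *ᵥ v = lam • v) (hvne : v ≠ 0)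
    (hlam : ε < ‖lam‖) :
    v 0 ≠ 0 ∧
    (∀ j, ‖v j‖ ≤ ‖v 0‖) ∧
    (∀ j, j ≠ 0 → ‖lam‖ * ‖v j‖ ≤
        (ε - ∑ j ∈ univ.erase 0, (A 0 j).re) * ‖v 0‖) ∧
    ‖lam - (1 - (ε:ℂ))‖ ≤ (∑ j ∈ univ.erase 0, (A 0 j).re) ∧
    ‖lam‖ * ‖lam - (1 - (ε:ℂ))‖ ≤
      (∑ j ∈ univ.erase 0, (A 0 j).re) * (ε - ∑ j ∈ univ.erase 0, (A 0 j).re) := by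
  obtain ⟨hs0, hsε, hρ⟩ := domEig_row_facts A hnonneg h00 hsum
  set s := ∑ j ∈ univ.erase 0, (A 0 j).re with hs
  have hrow : ∀ i, ∑ j, A i j * v j = lam * v i := by
    intro i
    have := congrFun hv i
    simpa [Matrix.mulVec, dotProduct] using this
  obtain ⟨k, -, hk⟩ := Finset.exists_max_image univ (fun j => ‖v j‖) ⟨0, mem_univ 0⟩
  have hk' : ∀ j, ‖v j‖ ≤ ‖v k‖ := fun j => hk j (mem_univ j)
  have hMpos : 0 < ‖v k‖ := by
    obtain ⟨j, hj⟩ := Function.ne_iff.mp hvne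
    exact lt_of_lt_of_le (by simpa using hj) (hk' j)
  have hrowb : ∀ i, i ≠ 0 → ‖lam‖ * ‖v i‖ ≤
      (ε - s) * ‖v k‖ := by
    intro i hi
    have h1 : ‖lam‖ * ‖v i‖ = ‖∑ j, A i j * v j‖ := by
      rw [hrow i, norm_mul]
    rw [h1]
    refine le_trans (domEig_sum_abs_bound A hnonneg hreal i univ v) ?_
    calc ∑ j, (A i j).re * ‖v j‖
        ≤ ∑ j, (A i j).re * ‖v k‖ :=
          Finset.sum_le_sum fun j _ => mul_le_mul_of_nonneg_left (hk' j) (hnonneg i j)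
      _ = (∑ j, (A i j).re) * ‖v k‖ := by rw [Finset.sum_mul]
      _ ≤ (ε - s) * ‖v k‖ :=
          mul_le_mul_of_nonneg_right (hρ i hi) (norm_nonneg _)
  have hmax0 : ∀ j, ‖v j‖ ≤ ‖v 0‖ := by
    by_cases hk0 : k = 0
    · rw [← hk0]; exact hk'
    · exfalso
      have h2 := hrowb k hk0
      nlinarith [hk' k, hMpos, hlam, norm_nonneg lam]
  have hv0pos : 0 < ‖v 0‖ := lt_of_lt_of_le hMpos (hmax0 k)
  have hv0ne : v 0 ≠ 0 := by
    intro h; rw [h] at hv0pos; simp at hv0pos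
  have hrowb0 : ∀ i, i ≠ 0 → ‖lam‖ * ‖v i‖ ≤
      (ε - s) * ‖v 0‖ := by
    intro i hi
    have hkv : ‖v k‖ = ‖v 0‖ :=
      le_antisymm (hmax0 k) (hk' 0)
    rw [← hkv]; exact hrowb i hi
  have hid : (lam - (1 - (ε:ℂ))) * v 0 = ∑ j ∈ univ.erase 0, A 0 j * v j := by
    have h1 := hrow 0
    have h2 := Finset.add_sum_erase univ (fun j => A 0 j * v j) (mem_univ 0)
    beta_reduce at h2
    rw [← h2, h00] at h1
    linear_combination -h1
  have hcoarse : ‖lam - (1 - (ε:ℂ))‖ ≤ s := by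
    have h1 : ‖lam - (1 - (ε:ℂ))‖ * ‖v 0‖ ≤ s * ‖v 0‖ := by
      have h2 : ‖lam - (1 - (ε:ℂ))‖ * ‖v 0‖
          = ‖∑ j ∈ univ.erase 0, A 0 j * v j‖ := by
        rw [← norm_mul, hid]
      rw [h2]
      refine le_trans (domEig_sum_abs_bound A hnonneg hreal 0 _ v) ?_
      calc ∑ j ∈ univ.erase 0, (A 0 j).re * ‖v j‖
          ≤ ∑ j ∈ univ.erase 0, (A 0 j).re * ‖v 0‖ :=
            Finset.sum_le_sum fun j _ => mul_le_mul_of_nonneg_left (hmax0 j) (hnonneg 0 j)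
        _ = s * ‖v 0‖ := by rw [Finset.sum_mul]
    exact le_of_mul_le_mul_right h1 hv0pos
  have href : ‖lam‖ * ‖lam - (1 - (ε:ℂ))‖ ≤ s * (ε - s) := by
    have h1 : ‖lam‖ * (‖lam - (1 - (ε:ℂ))‖ * ‖v 0‖) ≤
        s * ((ε - s) * ‖v 0‖) := by
      have h2 : ‖lam - (1 - (ε:ℂ))‖ * ‖v 0‖
          = ‖∑ j ∈ univ.erase 0, A 0 j * v j‖ := by
        rw [← norm_mul, hid]
      rw [h2]
      calc ‖lam‖ * ‖∑ j ∈ univ.erase 0, A 0 j * v j‖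
          ≤ ‖lam‖ * ∑ j ∈ univ.erase 0, (A 0 j).re * ‖v j‖ :=
            mul_le_mul_of_nonneg_left (domEig_sum_abs_bound A hnonneg hreal 0 _ v)
              (norm_nonneg _)
        _ = ∑ j ∈ univ.erase 0, (A 0 j).re * (‖lam‖ * ‖v j‖) := by
            rw [Finset.mul_sum]; refine Finset.sum_congr rfl fun j _ => by ring
        _ ≤ ∑ j ∈ univ.erase 0, (A 0 j).re * ((ε - s) * ‖v 0‖) :=
            Finset.sum_le_sum fun j hj =>
              mul_le_mul_of_nonneg_left (hrowb0 j (Finset.ne_of_mem_erase hj)) (hnonneg 0 j)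
        _ = s * ((ε - s) * ‖v 0‖) := by rw [Finset.sum_mul]
    have h3 := le_of_mul_le_mul_right (by linarith [h1] :
      ‖lam‖ * ‖lam - (1 - (ε:ℂ))‖ * ‖v 0‖ ≤
      s * (ε - s) * ‖v 0‖) hv0pos
    exact h3
  exact ⟨hv0ne, hmax0, hrowb0, hcoarse, href⟩

end DomEigAux

/-- For `ε ∈ (0, 1/3)` and an `ℓ × ℓ` matrix `A` with nonnegative real
entries, `A_{0,0} = 1 − ε` and `Σ_{i,j} A_{i,j} = 1`, there is an eigenvalue `μ` with
`|μ − (1 − ε)| ≤ ε²/(1 − 2ε)`, and every other eigenvalue `λ` satisfies `|λ| ≤ ε`;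
in particular `μ` is the unique eigenvalue of maximal modulus. -/
theorem dominant_eigenvalue_of_near_projector
    {ℓ : ℕ} [NeZero ℓ] (hℓ : 1 ≤ ℓ) (ε : ℝ) (hε : ε ∈ Set.Ioo (0 : ℝ) (1 / 3))
    (A : Matrix (Fin ℓ) (Fin ℓ) ℂ)
    (hnonneg : ∀ i j, 0 ≤ (A i j).re) (hreal : ∀ i j, (A i j).im = 0)
    (h00 : A 0 0 = 1 - (ε : ℂ)) (hsum : ∑ i : Fin ℓ, ∑ j : Fin ℓ, A i j = 1) :
    ∃ μ : ℂ, A.charpoly.IsRoot μ ∧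
      ‖μ - (1 - (ε : ℂ))‖ ≤ ε ^ 2 / (1 - 2 * ε) ∧
      (∀ lam : ℂ, A.charpoly.IsRoot lam → lam ≠ μ → ‖lam‖ ≤ ε) := by
  obtain ⟨hε0, hε3⟩ := hε
  obtain ⟨hs0, hsε, hρ⟩ := domEig_row_facts A hnonneg h00 hsum
  set s := ∑ j ∈ univ.erase 0, (A 0 j).re with hs
  obtain ⟨μ, hμroot, hμbig⟩ := domEig_exists_big_root hℓ hε0 hε3 A hnonneg hreal h00
  obtain ⟨v, hvne, hv⟩ := domEig_exists_eigvec A hμroot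
  obtain ⟨hv0ne, hvmax, hvrow, hvco, hvref⟩ :=
    domEig_key A hε0 hnonneg hreal h00 hsum hv hvne hμbig
  have habsμ_lb : 1 - 2 * ε ≤ ‖μ‖ := by
    have h1 : ‖(1 : ℂ) - (ε:ℂ)‖ = 1 - ε := by
      rw [show (1 : ℂ) - (ε:ℂ) = (((1 - ε : ℝ)) : ℂ) by push_cast; ring,
        Complex.norm_real, Real.norm_eq_abs, abs_of_nonneg (by linarith)]
    have h2 : ‖(1:ℂ) - (ε:ℂ)‖ - ‖μ‖ ≤
        ‖μ - (1 - (ε:ℂ))‖ := by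
      have := abs_norm_sub_norm_le (μ) ((1:ℂ) - (ε:ℂ))
      have h4 := abs_le.mp this
      linarith [h4.1]
    have h3 : ‖μ - (1 - (ε:ℂ))‖ ≤ ε := le_trans hvco hsε
    linarith [h1 ▸ h2]
  refine ⟨μ, hμroot, ?_, ?_⟩
  · rw [le_div_iff₀ (by linarith : (0:ℝ) < 1 - 2 * ε)]
    nlinarith [hvref, habsμ_lb, norm_nonneg (μ - (1 - (ε:ℂ))), hs0, hsε,
      sq_nonneg (ε - s), sq_nonneg s, hvco]
  · intro lam hlroot hlne
    by_contra hgt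
    push_neg at hgt
    obtain ⟨u, hune, hu⟩ := domEig_exists_eigvec A hlroot
    obtain ⟨hu0ne, humax, hurow, huco, huref⟩ :=
      domEig_key A hε0 hnonneg hreal h00 hsum hu hune hgt
    have hablam_lb : 1 - 2 * ε ≤ ‖lam‖ := by
      have h1 : ‖(1 : ℂ) - (ε:ℂ)‖ = 1 - ε := by
        rw [show (1 : ℂ) - (ε:ℂ) = (((1 - ε : ℝ)) : ℂ) by push_cast; ring,
          Complex.norm_real, Real.norm_eq_abs, abs_of_nonneg (by linarith)]
      have h2 : ‖(1:ℂ) - (ε:ℂ)‖ - ‖lam‖ ≤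
          ‖lam - (1 - (ε:ℂ))‖ := by
        have := abs_norm_sub_norm_le (lam) ((1:ℂ) - (ε:ℂ))
        have h4 := abs_le.mp this
        linarith [h4.1]
      have h3 : ‖lam - (1 - (ε:ℂ))‖ ≤ ε := le_trans huco hsε
      linarith [h1 ▸ h2]
    -- build the auxiliary vector w
    set w : Fin ℓ → ℂ := fun j => v 0 * u j - u 0 * v j with hwdef
    have hrow_u : ∀ i, ∑ j, A i j * u j = lam * u i := by
      intro i
      have := congrFun hu i
      simpa [Matrix.mulVec, dotProduct] using this
    have hrow_v : ∀ i, ∑ j, A i j * v j = μ * v i := by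
      intro i
      have := congrFun hv i
      simpa [Matrix.mulVec, dotProduct] using this
    have hww : ∀ i, ∑ j, A i j * w j = μ * w i + (lam - μ) * v 0 * u i := by
      intro i
      have e1 : ∑ j, A i j * w j = v 0 * (∑ j, A i j * u j) - u 0 * (∑ j, A i j * v j) := by
        rw [Finset.mul_sum, Finset.mul_sum, ← Finset.sum_sub_distrib]
        exact Finset.sum_congr rfl fun j _ => by simp only [hwdef]; ring
      rw [e1, hrow_u i, hrow_v i]
      simp only [hwdef]
      ring
    have hw0 : w 0 = 0 := by simp only [hwdef]; ring
    have hcoef_ne : (lam - μ) * v 0 ≠ 0 :=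
      mul_ne_zero (sub_ne_zero.mpr hlne) hv0ne
    have hwne : w ≠ 0 := by
      intro h
      obtain ⟨i, hi⟩ := Function.ne_iff.mp hune
      have h2 := hww i
      rw [h] at h2
      simp only [Pi.zero_apply, mul_zero, Finset.sum_const_zero, zero_add] at h2
      exact hi (by
        rcases mul_eq_zero.mp h2.symm with h3 | h3
        · exact absurd h3 hcoef_ne
        · exact h3)
    obtain ⟨k, -, hwk⟩ := Finset.exists_max_image univ (fun j => ‖w j‖) ⟨0, mem_univ 0⟩
    have hwk' : ∀ j, ‖w j‖ ≤ ‖w k‖ := fun j => hwk j (mem_univ j)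
    have hWpos : 0 < ‖w k‖ := by
      obtain ⟨j, hj⟩ := Function.ne_iff.mp hwne
      exact lt_of_lt_of_le (by simpa using hj) (hwk' j)
    have hk0 : k ≠ 0 := by
      intro h
      rw [h, hw0] at hWpos
      simp at hWpos
    -- ineq2 : G * |u 0| ≤ s * |w k|
    have hineq2 : ‖(lam - μ) * v 0‖ * ‖u 0‖ ≤ s * ‖w k‖ := by
      have h1 := hww 0
      rw [hw0, mul_zero, zero_add] at h1
      have h2 : ∑ j, A 0 j * w j = ∑ j ∈ univ.erase 0, A 0 j * w j := by
        have h3 := Finset.add_sum_erase univ (fun j => A 0 j * w j) (mem_univ 0)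
        beta_reduce at h3
        rw [← h3, hw0, mul_zero, zero_add]
      rw [h2] at h1
      calc ‖(lam - μ) * v 0‖ * ‖u 0‖
          = ‖(lam - μ) * v 0 * u 0‖ := (norm_mul _ _).symm
        _ = ‖∑ j ∈ univ.erase 0, A 0 j * w j‖ := by rw [← h1]
        _ ≤ ∑ j ∈ univ.erase 0, (A 0 j).re * ‖w j‖ :=
            domEig_sum_abs_bound A hnonneg hreal 0 _ w
        _ ≤ ∑ j ∈ univ.erase 0, (A 0 j).re * ‖w k‖ :=
            Finset.sum_le_sum fun j _ => mul_le_mul_of_nonneg_left (hwk' j) (hnonneg 0 j)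
        _ = s * ‖w k‖ := by rw [Finset.sum_mul]
    -- ineq1 : |μ| |w k| ≤ (ε-s)|w k| + G |u k|
    have hineq1 : ‖μ‖ * ‖w k‖ ≤
        (ε - s) * ‖w k‖ +
          ‖(lam - μ) * v 0‖ * ‖u k‖ := by
      have h1 := hww k
      have h2 : μ * w k = (∑ j, A k j * w j) - (lam - μ) * v 0 * u k := by
        rw [h1]; ring
      calc ‖μ‖ * ‖w k‖ = ‖μ * w k‖ := (norm_mul _ _).symm
        _ ≤ ‖∑ j, A k j * w j‖ + ‖(lam - μ) * v 0 * u k‖ := by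
            rw [h2]
            have h5 := norm_sub_le (∑ j, A k j * w j) ((lam - μ) * v 0 * u k)
            exact h5
        _ ≤ (ε - s) * ‖w k‖ +
              ‖(lam - μ) * v 0‖ * ‖u k‖ := by
            have h3 : ‖∑ j, A k j * w j‖ ≤ (ε - s) * ‖w k‖ := by
              refine le_trans (domEig_sum_abs_bound A hnonneg hreal k univ w) ?_
              calc ∑ j, (A k j).re * ‖w j‖
                  ≤ ∑ j, (A k j).re * ‖w k‖ :=
                    Finset.sum_le_sum fun j _ =>
                      mul_le_mul_of_nonneg_left (hwk' j) (hnonneg k j)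
                _ = (∑ j, (A k j).re) * ‖w k‖ := by rw [Finset.sum_mul]
                _ ≤ (ε - s) * ‖w k‖ :=
                    mul_le_mul_of_nonneg_right (hρ k hk0) (norm_nonneg _)
            have h4 : ‖(lam - μ) * v 0 * u k‖ =
                ‖(lam - μ) * v 0‖ * ‖u k‖ := norm_mul _ _
            linarith
    -- ineq3 : |lam| |u k| ≤ (ε-s)|u 0|
    have hineq3 : ‖lam‖ * ‖u k‖ ≤ (ε - s) * ‖u 0‖ :=
      hurow k hk0
    have hU0 : 0 < ‖u 0‖ := by
      simpa [norm_pos_iff] using hu0ne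
    have hUW : (0:ℝ) < ‖u 0‖ * ‖w k‖ := mul_pos hU0 hWpos
    -- combine
    have h4 : (‖(lam - μ) * v 0‖ * ‖u 0‖) *
        (‖lam‖ * ‖u k‖) ≤
        (s * ‖w k‖) * ((ε - s) * ‖u 0‖) :=
      mul_le_mul hineq2 hineq3
        (mul_nonneg (norm_nonneg _) (norm_nonneg _))
        (mul_nonneg (by linarith [hs0] : (0:ℝ) ≤ s) (norm_nonneg _))
    have h5 : (‖lam‖ * ‖u 0‖) * (‖μ‖ * ‖w k‖) ≤
        (‖lam‖ * ‖u 0‖) *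
          ((ε - s) * ‖w k‖ +
            ‖(lam - μ) * v 0‖ * ‖u k‖) :=
      mul_le_mul_of_nonneg_left hineq1
        (mul_nonneg (norm_nonneg _) (norm_nonneg _))
    have hstep : ‖lam‖ * ‖μ‖ ≤ (ε - s) * (‖lam‖ + s) := by
      rw [← mul_le_mul_iff_of_pos_right hUW]
      nlinarith [h4, h5]
    have h1m3 : (0:ℝ) ≤ 1 - 3 * ε := by linarith
    nlinarith [hstep, hablam_lb, habsμ_lb, hs0, hsε,
      mul_nonneg (sub_nonneg.mpr hablam_lb) (by linarith : (0:ℝ) ≤ 1 - 3 * ε + s),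
      mul_nonneg (by linarith : (0:ℝ) ≤ ‖lam‖)
        (sub_nonneg.mpr habsμ_lb),
      mul_nonneg hs0 h1m3,
      mul_pos (by linarith : (0:ℝ) < 1 - 2 * ε) (by linarith : (0:ℝ) < 1 - 3 * ε),
      sq_nonneg s]
end

section
/- Let (M_k) be any family of ℂ-linear maps on d^n × d^n complex matrices indexed by k ∈ (ℤ/dℤ)^n, let M̂_k be its randomized compilation, and for a, b ∈ (ℤ/dℤ)^n define ν_{a,b} = d^{-2n} Σ_{s,t ∈ (ℤ/dℤ)^n} ν̃_{s,t}(M) · χ_s(a)* · χ_t(b), and let N be the matrix with rows and columns indexed by (ℤ/dℤ)^n given by N_{b,a} = ν_{a,b}. Then for every positive integer m and every d^n × d^n complex matrix ρ, Tr[ (M̂_0)^m(ρ) ] = Σ_{a,b ∈ (ℤ/dℤ)^n} (N^m)_{b,a} · ⟨a| ρ |a⟩, i.e. the probability of obtaining the all-zeros outcome m times in a row equals 𝟙† N^m ρ⃗ where ρ⃗ is the vector of diagonal entries of ρ and 𝟙 is the all-ones vector. -/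
open scoped BigOperators
open Matrix

/-- Index set `(ℤ/dℤ)^n`. -/
abbrev QIdx (d n : ℕ) := Fin n → ZMod d

/-- `d^n × d^n` complex matrices, indexed by `(ℤ/dℤ)^n`. -/
abbrev QMat (d n : ℕ) := Matrix (QIdx d n) (QIdx d n) ℂ

/-- The character `χ_z(j) = exp(2πi (z·j) / d)`. -/
noncomputable def chi (d n : ℕ) (z j : QIdx d n) : ℂ :=
  Complex.exp (2 * Real.pi * Complex.I * ((∑ i, (z i).val * (j i).val : ℕ) : ℂ) / d)

/-- The Weyl operator `X^x`, acting by `X^x |j⟩ = |j + x⟩`. -/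
noncomputable def WX (d n : ℕ) (x : QIdx d n) : QMat d n :=
  Matrix.of fun a b => if a = b + x then (1 : ℂ) else 0

/-- The Weyl operator `Z^z`, acting by `Z^z |j⟩ = χ_z(j) |j⟩`. -/
noncomputable def WZ (d n : ℕ) (z : QIdx d n) : QMat d n :=
  Matrix.diagonal fun j => chi d n z j

/-- The generalized Pauli fidelities
`ν̃_{s,t}(M) = d^{-n} Σ_k χ_k(s−t)^* Tr((Z^t)† M_k(Z^s))`. -/
noncomputable def gpf (d n : ℕ) [NeZero d]
    (M : QIdx d n → (QMat d n →ₗ[ℂ] QMat d n)) (s t : QIdx d n) : ℂ :=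
  (1 / (d : ℂ) ^ n) *
    ∑ k : QIdx d n, (starRingEnd ℂ) (chi d n k (s - t)) * ((WZ d n t)ᴴ * M k (WZ d n s)).trace

/-- The randomized compilation
`M̂_k = d^{-3n} Σ_{a,b,x} 𝒳^x ∘ 𝒵^a ∘ M_{k−x} ∘ 𝒵^b ∘ 𝒳^{−x}`. -/
noncomputable def rc (d n : ℕ) [NeZero d]
    (M : QIdx d n → (QMat d n →ₗ[ℂ] QMat d n)) (k : QIdx d n) (ρ : QMat d n) : QMat d n :=
  (1 / (d : ℂ) ^ (3 * n)) •
    ∑ a : QIdx d n, ∑ b : QIdx d n, ∑ x : QIdx d n,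
      WX d n x * WZ d n a *
        (M (k - x) (WZ d n b * (WX d n (-x) * ρ * (WX d n (-x))ᴴ) * (WZ d n b)ᴴ)) *
        (WZ d n a)ᴴ * (WX d n x)ᴴ


noncomputable def ee (d : ℕ) (N : ℕ) : ℂ := Complex.exp (2 * Real.pi * Complex.I * N / d)

lemma ee_add (d : ℕ) (N M : ℕ) : ee d (N + M) = ee d N * ee d M := by
  unfold ee
  rw [← Complex.exp_add]
  push_cast
  ring_nf

lemma ee_d_mul (d : ℕ) [NeZero d] (q : ℕ) : ee d (d * q) = 1 := by
  unfold ee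
  have hd : (d : ℂ) ≠ 0 := Nat.cast_ne_zero.mpr (NeZero.ne d)
  have : 2 * (Real.pi:ℂ) * Complex.I * ((d * q : ℕ) : ℂ) / d = (q : ℤ) * (2 * Real.pi * Complex.I) := by
    push_cast
    field_simp
  rw [this, Complex.exp_int_mul_two_pi_mul_I]

lemma ee_mod (d : ℕ) [NeZero d] (N : ℕ) : ee d N = ee d (N % d) := by
  conv_lhs => rw [← Nat.mod_add_div N d]
  rw [ee_add, ee_d_mul, mul_one]

lemma ee_congr (d : ℕ) [NeZero d] {N M : ℕ} (h : N ≡ M [MOD d]) : ee d N = ee d M := by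
  rw [ee_mod, h, ← ee_mod]

lemma ee_ne_one (d : ℕ) [NeZero d] {v : ℕ} (h0 : 0 < v) (h1 : v < d) : ee d v ≠ 1 := by
  unfold ee
  intro h
  rw [Complex.exp_eq_one_iff] at h
  obtain ⟨k, hk⟩ := h
  have hd : (d : ℂ) ≠ 0 := Nat.cast_ne_zero.mpr (NeZero.ne d)
  have hpi : (2 * (Real.pi:ℂ) * Complex.I) ≠ 0 := by
    simp [Real.pi_ne_zero, Complex.I_ne_zero]
  have hv : (v:ℂ) = (k:ℂ) * d := by
    field_simp at hk
    have h2 : 2*(Real.pi:ℂ)*Complex.I * v = 2*(Real.pi:ℂ)*Complex.I * ((k:ℂ)*d) := by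
      linear_combination (2*(Real.pi:ℂ)*Complex.I) * hk
    exact mul_left_cancel₀ hpi h2
  have hvz : (v:ℤ) = k * d := by exact_mod_cast hv
  have h0' : (0:ℤ) < v := by exact_mod_cast h0
  have h1' : (v:ℤ) < d := by exact_mod_cast h1
  have hdz : (0:ℤ) < d := by exact_mod_cast Nat.pos_of_ne_zero (NeZero.ne d)
  have hk0 : 0 < k := by nlinarith
  nlinarith

lemma chi_eq (d n : ℕ) (z j : Fin n → ZMod d) :
    chi d n z j = ee d (∑ i, (z i).val * (j i).val) := rfl

lemma chi_comm (d n : ℕ) (z j : Fin n → ZMod d) : chi d n z j = chi d n j z := by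
  simp [chi_eq, mul_comm]

lemma chi_zero_right (d n : ℕ) (z : Fin n → ZMod d) : chi d n z 0 = 1 := by
  simp [chi_eq, ee]

lemma chi_add_right (d n : ℕ) [NeZero d] (z u v : Fin n → ZMod d) :
    chi d n z (u + v) = chi d n z u * chi d n z v := by
  rw [chi_eq, chi_eq, chi_eq, ← ee_add]
  apply ee_congr
  rw [← ZMod.natCast_eq_natCast_iff]
  push_cast
  simp only [ZMod.natCast_val, ZMod.cast_id]
  rw [← Finset.sum_add_distrib]
  congr 1
  ext i
  simp [Pi.add_apply, mul_add]

lemma chi_add_left (d n : ℕ) [NeZero d] (z w u : Fin n → ZMod d) :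
    chi d n (z + w) u = chi d n z u * chi d n w u := by
  rw [chi_comm, chi_add_right, chi_comm d n u z, chi_comm d n u w]

lemma conj_chi_mul_self (d n : ℕ) (z j : Fin n → ZMod d) :
    (starRingEnd ℂ) (chi d n z j) * chi d n z j = 1 := by
  rw [chi_eq]
  unfold ee
  rw [← Complex.exp_conj, ← Complex.exp_add]
  have : (starRingEnd ℂ) (2 * (Real.pi:ℂ) * Complex.I * ((∑ i, (z i).val * (j i).val : ℕ):ℂ) / d)
      = -(2 * (Real.pi:ℂ) * Complex.I * ((∑ i, (z i).val * (j i).val : ℕ):ℂ) / d) := by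
    simp [map_div₀, Complex.conj_I, map_ofNat]
    ring
  rw [this, neg_add_cancel, Complex.exp_zero]

lemma chi_mul_conj (d n : ℕ) [NeZero d] (s u v : Fin n → ZMod d) :
    chi d n s u * (starRingEnd ℂ) (chi d n s v) = chi d n s (u - v) := by
  have h : chi d n s u = chi d n s (u - v) * chi d n s v := by
    rw [← chi_add_right, sub_add_cancel]
  rw [h, mul_assoc, mul_comm (chi d n s v), conj_chi_mul_self, mul_one]

lemma sum_chi (d n : ℕ) [NeZero d] (hd : 2 ≤ d) (u : Fin n → ZMod d) :
    ∑ s : Fin n → ZMod d, chi d n s u = if u = 0 then ((d : ℂ) ^ n) else 0 := by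
  by_cases hu : u = 0
  · subst hu
    simp [chi_zero_right, Finset.card_univ]
  · simp only [hu, if_false]
    obtain ⟨i₀, hi₀⟩ := Function.ne_iff.mp hu
    haveI : Fact (1 < d) := ⟨hd⟩
    set w : Fin n → ZMod d := Pi.single i₀ 1 with hw
    have hchiw : chi d n w u = ee d ((u i₀).val) := by
      rw [chi_eq]
      congr 1
      rw [Finset.sum_eq_single i₀]
      · simp [hw, ZMod.val_one]
      · intro i _ hi
        simp [hw, Pi.single_eq_of_ne hi]
      · simp
    have hne : chi d n w u ≠ 1 := by
      rw [hchiw]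
      exact ee_ne_one d (ZMod.val_pos.mpr hi₀) (ZMod.val_lt _)
    have hshift : (∑ s : Fin n → ZMod d, chi d n s u) * chi d n w u
        = ∑ s : Fin n → ZMod d, chi d n s u := by
      rw [Finset.sum_mul]
      exact Fintype.sum_equiv (Equiv.addRight w) _ _ (fun s => by
        simp [Equiv.coe_addRight, ← chi_add_left])
    have hz : (∑ s : Fin n → ZMod d, chi d n s u) * (chi d n w u - 1) = 0 := by
      rw [mul_sub, hshift, mul_one, sub_self]
    rcases mul_eq_zero.mp hz with h | h
    · exact h
    · exact absurd (sub_eq_zero.mp h) hne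

lemma sum_chi_mul_conj (d n : ℕ) [NeZero d] (hd : 2 ≤ d) (u v : Fin n → ZMod d) :
    ∑ s : Fin n → ZMod d, chi d n s u * (starRingEnd ℂ) (chi d n s v)
      = if u = v then ((d : ℂ) ^ n) else 0 := by
  simp_rw [chi_mul_conj]
  rw [sum_chi d n hd]
  simp [sub_eq_zero]

lemma card_QIdx (d n : ℕ) [NeZero d] : Fintype.card (QIdx d n) = d ^ n := by
  simp [Fintype.card_fun, ZMod.card]

lemma WX_mul_apply (d n : ℕ) [NeZero d] (x : QIdx d n) (A : QMat d n) (p q : QIdx d n) :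
    (WX d n x * A) p q = A (p - x) q := by
  simp only [Matrix.mul_apply, WX, Matrix.of_apply, ite_mul, one_mul, zero_mul]
  rw [Finset.sum_eq_single (p - x)]
  · simp
  · intro c _ hc
    rw [if_neg]
    intro h
    exact hc (by rw [h]; simp)
  · simp

lemma mul_WXH_apply (d n : ℕ) [NeZero d] (x : QIdx d n) (A : QMat d n) (p q : QIdx d n) :
    (A * (WX d n x)ᴴ) p q = A p (q - x) := by
  simp only [Matrix.mul_apply, Matrix.conjTranspose_apply, WX, Matrix.of_apply]
  have : ∀ c : QIdx d n, star (if q = c + x then (1:ℂ) else 0) = if q = c + x then (1:ℂ) else 0 := by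
    intro c; split <;> simp
  simp only [this, mul_ite, mul_one, mul_zero]
  rw [Finset.sum_eq_single (q - x)]
  · simp
  · intro c _ hc
    rw [if_neg]
    intro h
    exact hc (by rw [h]; simp)
  · simp

lemma WZ_mul_apply (d n : ℕ) [NeZero d] (z : QIdx d n) (A : QMat d n) (p q : QIdx d n) :
    (WZ d n z * A) p q = chi d n z p * A p q := by
  simp [WZ, Matrix.diagonal_mul]

lemma mul_WZH_apply (d n : ℕ) [NeZero d] (z : QIdx d n) (A : QMat d n) (p q : QIdx d n) :
    (A * (WZ d n z)ᴴ) p q = A p q * (starRingEnd ℂ) (chi d n z q) := by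
  rw [WZ, Matrix.diagonal_conjTranspose]
  simp [Matrix.mul_diagonal]

lemma diagonal_eq_sum_std (d n : ℕ) [NeZero d] (f : QIdx d n → ℂ) :
    Matrix.diagonal f = ∑ j, f j • Matrix.single j j (1:ℂ) := by
  ext p q
  simp only [Matrix.sum_apply, Matrix.smul_apply, Matrix.single, Matrix.of_apply,
    smul_eq_mul, mul_ite, mul_one, mul_zero]
  by_cases h : p = q
  · subst h
    simp [Matrix.diagonal_apply_eq]
  · rw [Matrix.diagonal_apply_ne _ h]
    rw [Finset.sum_eq_zero]
    intro j _
    rw [if_neg]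
    rintro ⟨rfl, rfl⟩
    exact h rfl

lemma trace_WZH_mul (d n : ℕ) [NeZero d] (t : QIdx d n) (A : QMat d n) :
    ((WZ d n t)ᴴ * A).trace = ∑ l, (starRingEnd ℂ) (chi d n t l) * A l l := by
  rw [Matrix.trace]
  apply Finset.sum_congr rfl
  intro l _
  rw [Matrix.diag_apply, WZ, Matrix.diagonal_conjTranspose, Matrix.diagonal_mul]
  simp

lemma chi_sandwich (d n : ℕ) [NeZero d] (z j : QIdx d n) (c : ℂ) :
    chi d n z j * c * (starRingEnd ℂ) (chi d n z j) = c := by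
  have h := conj_chi_mul_self d n z j
  linear_combination c * h

lemma conj_chi_sub (d n : ℕ) [NeZero d] (k s t : QIdx d n) :
    (starRingEnd ℂ) (chi d n k (s - t))
      = (starRingEnd ℂ) (chi d n s k) * chi d n t k := by
  rw [← chi_mul_conj d n k s t, _root_.map_mul, Complex.conj_conj, chi_comm d n k s, chi_comm d n k t]

lemma sum_WZ_conj (d n : ℕ) [NeZero d] (hd : 2 ≤ d) (Q : QMat d n) :
    ∑ c : QIdx d n, WZ d n c * Q * (WZ d n c)ᴴ
      = ((d:ℂ)^n) • Matrix.diagonal (fun p => Q p p) := by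
  ext p q
  simp only [Matrix.sum_apply, Matrix.smul_apply, smul_eq_mul]
  have h1 : ∀ c : QIdx d n, (WZ d n c * Q * (WZ d n c)ᴴ) p q
      = (chi d n c p * (starRingEnd ℂ) (chi d n c q)) * Q p q := by
    intro c
    rw [mul_WZH_apply, WZ_mul_apply]
    ring
  rw [Finset.sum_congr rfl (fun c _ => h1 c), ← Finset.sum_mul, sum_chi_mul_conj d n hd]
  by_cases h : p = q
  · subst h; simp [Matrix.diagonal_apply_eq]
  · simp [h, Matrix.diagonal_apply_ne _ h]

lemma sum_comm5 {α : Type*} [Fintype α] {β : Type*} [AddCommMonoid β]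
    (f : α → α → α → α → α → β) :
    ∑ s : α, ∑ t : α, ∑ k : α, ∑ l : α, ∑ j : α, f s t k l j
      = ∑ k : α, ∑ l : α, ∑ j : α, ∑ s : α, ∑ t : α, f s t k l j :=
  calc ∑ s : α, ∑ t : α, ∑ k : α, ∑ l : α, ∑ j : α, f s t k l j
      = ∑ s : α, ∑ k : α, ∑ t : α, ∑ l : α, ∑ j : α, f s t k l j :=
        Finset.sum_congr rfl fun _ _ => Finset.sum_comm
    _ = ∑ k : α, ∑ s : α, ∑ t : α, ∑ l : α, ∑ j : α, f s t k l j := Finset.sum_comm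
    _ = ∑ k : α, ∑ s : α, ∑ l : α, ∑ t : α, ∑ j : α, f s t k l j :=
        Finset.sum_congr rfl fun _ _ => Finset.sum_congr rfl fun _ _ => Finset.sum_comm
    _ = ∑ k : α, ∑ l : α, ∑ s : α, ∑ t : α, ∑ j : α, f s t k l j :=
        Finset.sum_congr rfl fun _ _ => Finset.sum_comm
    _ = ∑ k : α, ∑ l : α, ∑ s : α, ∑ j : α, ∑ t : α, f s t k l j :=
        Finset.sum_congr rfl fun _ _ => Finset.sum_congr rfl fun _ _ =>
          Finset.sum_congr rfl fun _ _ => Finset.sum_comm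
    _ = ∑ k : α, ∑ l : α, ∑ j : α, ∑ s : α, ∑ t : α, f s t k l j :=
        Finset.sum_congr rfl fun _ _ => Finset.sum_congr rfl fun _ _ => Finset.sum_comm

lemma N_formula (d n : ℕ) [NeZero d] (hd : 2 ≤ d)
    (M : QIdx d n → (QMat d n →ₗ[ℂ] QMat d n))
    (N : Matrix (QIdx d n) (QIdx d n) ℂ)
    (hN : ∀ a b : QIdx d n, N b a =
      (1 / (d : ℂ) ^ (2 * n)) *
        ∑ s : QIdx d n, ∑ t : QIdx d n,
          gpf d n M s t * (starRingEnd ℂ) (chi d n s a) * chi d n t b)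
    (a b : QIdx d n) :
    N b a = (1 / (d:ℂ)^n) * ∑ x : QIdx d n,
      (M (0 - x) (Matrix.single (a - x) (a - x) (1:ℂ))) (b - x) (b - x) := by
  have hdc : ((d:ℂ)) ≠ 0 := Nat.cast_ne_zero.mpr (NeZero.ne d)
  have hdn : ((d:ℂ)^n) ≠ 0 := pow_ne_zero _ hdc
  set F : QIdx d n → QIdx d n → QIdx d n → ℂ :=
    fun k j l => (M k (Matrix.single j j (1:ℂ))) l l with hF
  have htr : ∀ s t k : QIdx d n, ((WZ d n t)ᴴ * M k (WZ d n s)).trace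
      = ∑ l, ∑ j, (starRingEnd ℂ) (chi d n t l) * (chi d n s j * F k j l) := by
    intro s t k
    rw [trace_WZH_mul]
    refine Finset.sum_congr rfl fun l _ => ?_
    have hMWZ : M k (WZ d n s) = ∑ j, chi d n s j • M k (Matrix.single j j (1:ℂ)) := by
      rw [WZ, diagonal_eq_sum_std, map_sum]
      simp_rw [_root_.map_smul]
    rw [hMWZ, Matrix.sum_apply, Finset.mul_sum]
    refine Finset.sum_congr rfl fun j _ => ?_
    simp [hF]
  have hmerge : ∀ s t k l j : QIdx d n,
      (starRingEnd ℂ) (chi d n k (s - t)) *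
          ((starRingEnd ℂ) (chi d n t l) * (chi d n s j * F k j l)) *
          (starRingEnd ℂ) (chi d n s a) * chi d n t b
      = (chi d n s j * (starRingEnd ℂ) (chi d n s (k + a))) *
          (chi d n t (k + b) * (starRingEnd ℂ) (chi d n t l)) * F k j l := by
    intro s t k l j
    rw [conj_chi_sub, chi_add_right d n s k a, chi_add_right d n t k b, _root_.map_mul]
    ring
  have hgpf : ∀ s t : QIdx d n,
      gpf d n M s t * (starRingEnd ℂ) (chi d n s a) * chi d n t b
      = (1/(d:ℂ)^n) * ∑ k, ∑ l, ∑ j,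
          (chi d n s j * (starRingEnd ℂ) (chi d n s (k + a))) *
          (chi d n t (k + b) * (starRingEnd ℂ) (chi d n t l)) * F k j l := by
    intro s t
    rw [gpf]
    simp_rw [htr s t]
    rw [mul_assoc (1/(d:ℂ)^n), mul_assoc (1/(d:ℂ)^n), Finset.sum_mul, Finset.sum_mul]
    congr 1
    refine Finset.sum_congr rfl fun k _ => ?_
    rw [Finset.mul_sum, Finset.sum_mul, Finset.sum_mul]
    refine Finset.sum_congr rfl fun l _ => ?_
    rw [Finset.mul_sum, Finset.sum_mul, Finset.sum_mul]
    exact Finset.sum_congr rfl fun j _ => hmerge s t k l j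
  rw [hN a b]
  rw [Finset.sum_congr rfl (fun s _ => Finset.sum_congr rfl (fun t _ => hgpf s t))]
  simp_rw [← Finset.mul_sum]
  rw [sum_comm5]
  have hcol : ∀ k l : QIdx d n, ∀ j : QIdx d n,
      (∑ s : QIdx d n, ∑ t : QIdx d n,
        (chi d n s j * (starRingEnd ℂ) (chi d n s (k + a))) *
        (chi d n t (k + b) * (starRingEnd ℂ) (chi d n t l)) * F k j l)
      = (if j = k + a then ((d:ℂ)^n) else 0) * (if k + b = l then ((d:ℂ)^n) else 0)
          * F k j l := by
    intro k l j
    calc ∑ s : QIdx d n, ∑ t : QIdx d n,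
          (chi d n s j * (starRingEnd ℂ) (chi d n s (k + a))) *
          (chi d n t (k + b) * (starRingEnd ℂ) (chi d n t l)) * F k j l
        = ∑ s : QIdx d n, (chi d n s j * (starRingEnd ℂ) (chi d n s (k + a)) * F k j l) *
            ∑ t : QIdx d n, chi d n t (k + b) * (starRingEnd ℂ) (chi d n t l) := by
          refine Finset.sum_congr rfl fun s _ => ?_
          rw [Finset.mul_sum]
          exact Finset.sum_congr rfl fun t _ => by ring
      _ = (∑ s : QIdx d n, chi d n s j * (starRingEnd ℂ) (chi d n s (k + a))) *
            (∑ t : QIdx d n, chi d n t (k + b) * (starRingEnd ℂ) (chi d n t l)) * F k j l := by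
          rw [← Finset.sum_mul, ← Finset.sum_mul]
          ring
      _ = (if j = k + a then ((d:ℂ)^n) else 0) * (if k + b = l then ((d:ℂ)^n) else 0)
            * F k j l := by
          rw [sum_chi_mul_conj d n hd, sum_chi_mul_conj d n hd]
  simp_rw [hcol]
  simp only [ite_mul, zero_mul, Finset.sum_ite_eq, Finset.sum_ite_eq', Finset.mem_univ, if_true]
  have hre : ∑ k : QIdx d n, F k (k + a) (k + b)
      = ∑ x : QIdx d n, F (0 - x) (a - x) (b - x) := by
    refine Fintype.sum_equiv (Equiv.neg (QIdx d n)) _ _ fun k => ?_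
    simp only [Equiv.neg_apply, zero_sub, neg_neg, sub_neg_eq_add, zero_add]
    rw [add_comm a k, add_comm b k]
  rw [← hre]
  have hpow : ((d:ℂ)^(2*n)) = (d:ℂ)^n * (d:ℂ)^n := by rw [two_mul, pow_add]
  simp only [mul_ite, mul_zero, ite_mul, zero_mul, Finset.sum_ite_eq, Finset.mem_univ, if_true]
  simp_rw [← Finset.mul_sum]
  rw [hpow]
  field_simp

lemma rc_diag (d n : ℕ) [NeZero d] (hd : 2 ≤ d)
    (M : QIdx d n → (QMat d n →ₗ[ℂ] QMat d n)) (σ : QMat d n) (b : QIdx d n) :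
    (rc d n M 0 σ) b b
      = ∑ a : QIdx d n, ((1/(d:ℂ)^n) * ∑ x : QIdx d n,
          (M (0 - x) (Matrix.single (a - x) (a - x) (1:ℂ))) (b - x) (b - x)) * σ a a := by
  have hdc : ((d:ℂ)) ≠ 0 := Nat.cast_ne_zero.mpr (NeZero.ne d)
  have hdn : ((d:ℂ)^n) ≠ 0 := pow_ne_zero _ hdc
  rw [rc]
  simp only [Matrix.smul_apply, Matrix.sum_apply, smul_eq_mul]
  have hterm : ∀ α c x : QIdx d n,
      (WX d n x * WZ d n α *
        (M (0 - x) (WZ d n c * (WX d n (-x) * σ * (WX d n (-x))ᴴ) * (WZ d n c)ᴴ)) *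
        (WZ d n α)ᴴ * (WX d n x)ᴴ) b b
      = (M (0 - x) (WZ d n c * (WX d n (-x) * σ * (WX d n (-x))ᴴ) * (WZ d n c)ᴴ)) (b - x) (b - x) := by
    intro α c x
    rw [mul_WXH_apply, mul_WZH_apply, mul_assoc (WX d n x), WX_mul_apply, WZ_mul_apply]
    exact chi_sandwich d n α (b - x) _
  simp_rw [hterm]
  rw [Finset.sum_const, Finset.card_univ, card_QIdx, nsmul_eq_mul]
  rw [Finset.sum_comm]
  have hx : ∀ x : QIdx d n,
      ∑ c : QIdx d n,
        (M (0 - x) (WZ d n c * (WX d n (-x) * σ * (WX d n (-x))ᴴ) * (WZ d n c)ᴴ)) (b - x) (b - x)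
      = ((d:ℂ)^n) * ∑ j : QIdx d n,
          σ (j + x) (j + x) * (M (0 - x) (Matrix.single j j (1:ℂ))) (b - x) (b - x) := by
    intro x
    rw [show ∑ c : QIdx d n,
        (M (0 - x) (WZ d n c * (WX d n (-x) * σ * (WX d n (-x))ᴴ) * (WZ d n c)ᴴ)) (b - x) (b - x)
      = (M (0 - x) (∑ c : QIdx d n,
          WZ d n c * (WX d n (-x) * σ * (WX d n (-x))ᴴ) * (WZ d n c)ᴴ)) (b - x) (b - x) by
        rw [map_sum, Matrix.sum_apply]]
    rw [sum_WZ_conj d n hd]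
    have hQ : (fun p => (WX d n (-x) * σ * (WX d n (-x))ᴴ) p p) = fun p => σ (p + x) (p + x) := by
      funext p
      rw [mul_WXH_apply, WX_mul_apply]
      simp [sub_neg_eq_add]
    rw [hQ, _root_.map_smul, Matrix.smul_apply, smul_eq_mul, diagonal_eq_sum_std, map_sum,
      Matrix.sum_apply]
    congr 1
    refine Finset.sum_congr rfl fun j _ => ?_
    rw [_root_.map_smul, Matrix.smul_apply, smul_eq_mul]
  simp_rw [hx]
  simp_rw [← Finset.mul_sum]
  have hre : ∀ x : QIdx d n,
      ∑ j : QIdx d n, σ (j + x) (j + x) * (M (0 - x) (Matrix.single j j (1:ℂ))) (b - x) (b - x)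
      = ∑ a : QIdx d n, σ a a * (M (0 - x) (Matrix.single (a - x) (a - x) (1:ℂ))) (b - x) (b - x) := by
    intro x
    refine Fintype.sum_equiv (Equiv.addRight x) _ _ fun j => ?_
    simp [Equiv.coe_addRight, add_sub_cancel_right]
  simp_rw [hre]
  rw [Finset.sum_comm]
  have h3 : ((d:ℂ)^(3*n)) = (d:ℂ)^n * ((d:ℂ)^n * (d:ℂ)^n) := by
    rw [show 3*n = n + (n + n) by ring, pow_add, pow_add]
  have hc : ∀ X : ℂ, 1/(d:ℂ)^(3*n) * ((((d:ℕ)^n : ℕ) : ℂ) * ((d:ℂ)^n * X)) = (1/(d:ℂ)^n) * X := by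
    intro X
    push_cast
    rw [h3]
    field_simp
  rw [hc]
  rw [Finset.mul_sum]
  refine Finset.sum_congr rfl fun a _ => ?_
  rw [Finset.mul_sum, Finset.mul_sum, Finset.sum_mul]
  refine Finset.sum_congr rfl fun x _ => ?_
  ring

/-- With `ν_{a,b} = d^{-2n} Σ_{s,t} ν̃_{s,t}(M) χ_s(a)^* χ_t(b)` and the
matrix `N` with `N_{b,a} = ν_{a,b}`, the probability of `m` successive all-zero outcomes is
`Tr[(M̂_0)^m(ρ)] = Σ_{a,b} (N^m)_{b,a} ⟨a|ρ|a⟩`. -/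
theorem trace_rc_zero_iterate_eq_matrix_power
    (d n : ℕ) [NeZero d] (hd : 2 ≤ d) (hn : 1 ≤ n)
    (M : QIdx d n → (QMat d n →ₗ[ℂ] QMat d n))
    (N : Matrix (QIdx d n) (QIdx d n) ℂ)
    (hN : ∀ a b : QIdx d n, N b a =
      (1 / (d : ℂ) ^ (2 * n)) *
        ∑ s : QIdx d n, ∑ t : QIdx d n,
          gpf d n M s t * (starRingEnd ℂ) (chi d n s a) * chi d n t b)
    (m : ℕ) (hm : 1 ≤ m) (ρ : QMat d n) :
    ((rc d n M 0)^[m] ρ).trace = ∑ a : QIdx d n, ∑ b : QIdx d n, (N ^ m) b a * ρ a a := by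
  have key : ∀ σ : QMat d n, ∀ b, (rc d n M 0 σ) b b = ∑ a, N b a * σ a a := by
    intro σ b
    rw [rc_diag d n hd M σ b]
    exact Finset.sum_congr rfl fun a _ => by rw [← N_formula d n hd M N hN a b]
  have iter : ∀ m : ℕ, ∀ b, ((rc d n M 0)^[m] ρ) b b = ∑ a, (N ^ m) b a * ρ a a := by
    intro m
    induction m with
    | zero =>
      intro b
      simp [Matrix.one_apply]
    | succ m ih =>
      intro b
      rw [Function.iterate_succ_apply', key]
      calc ∑ c, N b c * ((rc d n M 0)^[m] ρ) c c
          = ∑ c, N b c * ∑ a, (N ^ m) c a * ρ a a :=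
            Finset.sum_congr rfl fun c _ => by rw [ih c]
        _ = ∑ a, (N ^ (m+1)) b a * ρ a a := by
            rw [pow_succ']
            simp_rw [Matrix.mul_apply, Finset.mul_sum, Finset.sum_mul]
            rw [Finset.sum_comm]
            refine Finset.sum_congr rfl fun a _ => Finset.sum_congr rfl fun c _ => by ring
  rw [Matrix.trace]
  calc ∑ b, ((rc d n M 0)^[m] ρ).diag b
      = ∑ b, ∑ a, (N ^ m) b a * ρ a a :=
        Finset.sum_congr rfl fun b _ => iter m b
    _ = ∑ a, ∑ b, (N ^ m) b a * ρ a a := Finset.sum_comm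
end
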